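/- arXiv:0905.4921 — 14 statements merged into one kernel-verified Lean document; each statement's English description precedes it below -/
import Mathlib

section
/- For every integer n ≥ 2, the subfield of K generated by F and the elements a_1, b_1, a_2, b_2, …, a_n, b_n equals the subfield of K generated by F and the elements c_1, c_2, …, c_n. (In the notation of the paper, H_n = C_n for all n ≥ 2.) -/
/-- The smallest subfield of `K` containing the subfield `F` and the set `S`. -/
def fieldAdjoin {K : Type*} [Field K] (F : Subfield K) (S : Set K) : Subfield K :=
  Subfield.closure (↑F ∪ S)

theorem stmt_0
    (p : ℕ) (hp : p.Prime) (e : ℕ) (he : 0 < e) (q : ℕ) (hq : q = p ^ e)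
    {K : Type*} [Field K] [CharP K p]
    (a b c : ℕ → K)
    (ha0 : ∀ n, 1 ≤ n → a n ≠ 0)
    (ha1 : ∀ n, 1 ≤ n → a n ≠ 1)
    (ha2 : ∀ n, 1 ≤ n → a n ^ q + a n - 1 ≠ 0)
    (hR1 : ∀ n, 1 ≤ n → (1 - a (n + 1)) * a n = a (n + 1) ^ q * (a n ^ q + a n - 1))
    (hR2 : ∀ n, 1 ≤ n → c n ^ (q - 1) * a n = a n - 1)
    (hR3 : ∀ n, 1 ≤ n → b n ^ (q - 1) * a n = -(a n ^ q + a n - 1))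
    (hb0 : ∀ n, 1 ≤ n → b n ≠ 0)
    (hc0 : ∀ n, 1 ≤ n → c n ≠ 0)
    (F : Subfield K) (hFfin : Finite F) (hFcard : Nat.card F = q ^ 3)
    : ∀ n, 2 ≤ n →
      fieldAdjoin F (a '' Set.Icc 1 n ∪ b '' Set.Icc 1 n) = fieldAdjoin F (c '' Set.Icc 1 n) := by
  classical
  have hpfact : Fact p.Prime := ⟨hp⟩
  have hq2 : 2 ≤ q := by
    subst hq
    calc 2 ≤ p := hp.two_le
    _ = p ^ 1 := (pow_one p).symm
    _ ≤ p ^ e := Nat.pow_le_pow_right (Nat.le_of_lt hp.one_lt) he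
  have hQ : q - 1 + 1 = q := by omega
  -- every (q-1)-st root of unity lies in F
  have hF : ∀ x : K, x ^ (q - 1) = 1 → x ∈ F := by
    intro x hx
    have hx3 : x ^ q ^ 3 = x := by
      obtain ⟨k, hk⟩ : ∃ k, q = 1 + k := ⟨q - 1, by omega⟩
      have hk1 : q - 1 = k := by omega
      have hq3 : q ^ 3 = (q - 1) * (q ^ 2 + q + 1) + 1 := by
        subst hk; rw [hk1]; ring
      rw [hq3, pow_add, pow_mul, hx, one_pow, pow_one, one_mul]
    have : Fintype F := Fintype.ofFinite F
    have hFcard' : Fintype.card F = q ^ 3 := by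
      rw [← Nat.card_eq_fintype_card, hFcard]
    set P : Polynomial K := Polynomial.X ^ q ^ 3 - Polynomial.X with hP
    have hq3pos : 1 < q ^ 3 := by
      have : 2 ^ 3 ≤ q ^ 3 := Nat.pow_le_pow_left hq2 3
      omega
    have hdeg : P.natDegree = q ^ 3 := by
      rw [hP]
      rw [Polynomial.natDegree_sub_eq_left_of_natDegree_lt]
      · exact Polynomial.natDegree_X_pow _
      · simpa [Polynomial.natDegree_X_pow] using hq3pos
    have hP0 : P ≠ 0 := fun h => by simp [h] at hdeg; omega
    have hroot : ∀ y : K, y ^ q ^ 3 = y → y ∈ P.roots := by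
      intro y hy
      rw [Polynomial.mem_roots hP0]
      simp [hP, Polynomial.IsRoot, hy]
    -- elements of F are roots
    have hFroot : ∀ y : F, (y : K) ∈ P.roots := by
      intro y
      apply hroot
      have h1 : y ^ q ^ 3 = y := by
        rw [← hFcard']; exact FiniteField.pow_card y
      have := congrArg (fun z : F => (z : K)) h1
      simpa using this
    set T : Finset K := P.roots.toFinset with hT
    set S : Finset K := Finset.univ.image (fun y : F => (y : K)) with hS
    have hsub : S ⊆ T := by
      intro z hz
      rw [hS] at hz
      obtain ⟨y, _, rfl⟩ := Finset.mem_image.mp hz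
      exact Multiset.mem_toFinset.mpr (hFroot y)
    have hcardS : S.card = q ^ 3 := by
      rw [hS, Finset.card_image_of_injective _ Subtype.coe_injective,
        Finset.card_univ, hFcard']
    have hcardT : T.card ≤ q ^ 3 := by
      calc T.card ≤ Multiset.card P.roots := Multiset.toFinset_card_le _
      _ ≤ P.natDegree := Polynomial.card_roots' P
      _ = q ^ 3 := hdeg
    have hST : S = T := Finset.eq_of_subset_of_card_le hsub (by omega)
    have hxT : x ∈ T := Multiset.mem_toFinset.mpr (hroot x hx3)
    rw [← hST] at hxT
    obtain ⟨y, _, hy⟩ := Finset.mem_image.mp hxT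
    rw [← hy]; exact y.2
  -- ratio lemma
  have hratio : ∀ x y : K, y ≠ 0 → x ^ (q - 1) = y ^ (q - 1) →
      ∃ r, r ∈ F ∧ x = r * y := by
    intro x y hy hxy
    refine ⟨x / y, hF _ ?_, by field_simp⟩
    rw [div_pow, hxy, div_self (pow_ne_zero _ hy)]
  have hpow : ∀ x : K, x ^ (q - 1) * x = x ^ q := by
    intro x; rw [← pow_succ, hQ]
  -- Key identity 1 : (b m * a (m+1)) ^ (q-1) = c (m+1) ^ (q-1)
  have key1 : ∀ m, 1 ≤ m → (b m * a (m + 1)) ^ (q - 1) = c (m + 1) ^ (q - 1) := by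
    intro m hm
    have hA : a m ≠ 0 := ha0 m hm
    have hA' : a (m + 1) ≠ 0 := ha0 (m + 1) (by omega)
    apply mul_right_cancel₀ (mul_ne_zero hA hA')
    calc (b m * a (m + 1)) ^ (q - 1) * (a m * a (m + 1))
        = (b m ^ (q - 1) * a m) * (a (m + 1) ^ (q - 1) * a (m + 1)) := by
          rw [mul_pow]; ring
      _ = -(a m ^ q + a m - 1) * a (m + 1) ^ q := by rw [hR3 m hm, hpow]
      _ = -((1 - a (m + 1)) * a m) := by linear_combination hR1 m hm
      _ = (c (m + 1) ^ (q - 1) * a (m + 1)) * a m := by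
          rw [hR2 (m + 1) (by omega)]; ring
      _ = c (m + 1) ^ (q - 1) * (a m * a (m + 1)) := by ring
  -- Key identity 2 : (c m ^ q * a m * a (m+1)) ^ (q-1) = b (m+1) ^ (q-1)
  have key2 : ∀ m, 1 ≤ m →
      (c m ^ q * a m * a (m + 1)) ^ (q - 1) = b (m + 1) ^ (q - 1) := by
    intro m hm
    have hA : a m ≠ 0 := ha0 m hm
    have hA' : a (m + 1) ≠ 0 := ha0 (m + 1) (by omega)
    have hsub : (a m - 1) ^ q = a m ^ q - 1 := by
      have := sub_pow_char_pow (R := K) (p := p) (n := e) (x := a m) (y := 1)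
      rw [one_pow, ← hq] at this
      exact this
    apply mul_right_cancel₀ (mul_ne_zero hA hA')
    calc (c m ^ q * a m * a (m + 1)) ^ (q - 1) * (a m * a (m + 1))
        = (c m ^ q) ^ (q - 1) * ((a m ^ (q - 1) * a m) * (a (m + 1) ^ (q - 1) * a (m + 1))) := by
          rw [mul_pow, mul_pow]; ring
      _ = (c m ^ (q - 1)) ^ q * (a m ^ q * a (m + 1) ^ q) := by
          rw [pow_right_comm, hpow, hpow]
      _ = (c m ^ (q - 1) * a m) ^ q * a (m + 1) ^ q := by rw [mul_pow, mul_assoc]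
      _ = (a m - 1) ^ q * a (m + 1) ^ q := by rw [hR2 m hm]
      _ = (a m ^ q - 1) * a (m + 1) ^ q := by rw [hsub]
      _ = b (m + 1) ^ (q - 1) * (a m * a (m + 1)) := by
          linear_combination (-1 : K) * hR1 m hm - a m * hR3 (m + 1) (by omega)
  -- main argument
  intro n hn
  obtain ⟨m, rfl⟩ : ∃ m, n = m + 1 := ⟨n - 1, by omega⟩
  have hm : 1 ≤ m := by omega
  unfold fieldAdjoin
  set C := Subfield.closure (↑F ∪ c '' Set.Icc 1 (m + 1)) with hCdef
  set H := Subfield.closure (↑F ∪ (a '' Set.Icc 1 (m + 1) ∪ b '' Set.Icc 1 (m + 1))) with hHdef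
  have hFC : ∀ x ∈ F, x ∈ C := fun x hx =>
    Subfield.subset_closure (Or.inl hx)
  have hFH : ∀ x ∈ F, x ∈ H := fun x hx =>
    Subfield.subset_closure (Or.inl hx)
  have hcC : ∀ i, 1 ≤ i → i ≤ m + 1 → c i ∈ C := fun i h1 h2 =>
    Subfield.subset_closure (Or.inr ⟨i, Set.mem_Icc.mpr ⟨h1, h2⟩, rfl⟩)
  have haH : ∀ i, 1 ≤ i → i ≤ m + 1 → a i ∈ H := fun i h1 h2 =>
    Subfield.subset_closure (Or.inr (Or.inl ⟨i, Set.mem_Icc.mpr ⟨h1, h2⟩, rfl⟩))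
  have hbH : ∀ i, 1 ≤ i → i ≤ m + 1 → b i ∈ H := fun i h1 h2 =>
    Subfield.subset_closure (Or.inr (Or.inr ⟨i, Set.mem_Icc.mpr ⟨h1, h2⟩, rfl⟩))
  -- a i lies in C
  have haC : ∀ i, 1 ≤ i → i ≤ m + 1 → a i ∈ C := by
    intro i h1 h2
    have hmul : (1 - c i ^ (q - 1)) * a i = 1 := by
      linear_combination -hR2 i h1
    have hinv : a i = (1 - c i ^ (q - 1))⁻¹ := eq_inv_of_mul_eq_one_right hmul
    rw [hinv]
    exact C.inv_mem (C.sub_mem C.one_mem (C.pow_mem (hcC i h1 h2) _))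
  -- b i lies in C for all 1 ≤ i ≤ m + 1
  have hbC : ∀ i, 1 ≤ i → i ≤ m + 1 → b i ∈ C := by
    intro i h1 h2
    rcases Nat.lt_or_ge i (m + 1) with hlt | hge
    · -- i ≤ m : use key1
      obtain ⟨r, hrF, hr⟩ := hratio (b i * a (i + 1)) (c (i + 1))
        (hc0 (i + 1) (by omega)) (key1 i h1)
      have hbi : b i = r * c (i + 1) * (a (i + 1))⁻¹ := by
        rw [eq_mul_inv_iff_mul_eq₀ (ha0 (i + 1) (by omega))]
        exact hr
      rw [hbi]
      exact C.mul_mem (C.mul_mem (hFC r hrF) (hcC (i + 1) (by omega) (by omega)))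
        (C.inv_mem (haC (i + 1) (by omega) (by omega)))
    · -- i = m + 1 : use key2 at m
      have hi : i = m + 1 := by omega
      subst hi
      have hyne : c m ^ q * a m * a (m + 1) ≠ 0 :=
        mul_ne_zero (mul_ne_zero (pow_ne_zero _ (hc0 m hm)) (ha0 m hm))
          (ha0 (m + 1) (by omega))
      obtain ⟨r, hrF, hr⟩ := hratio (b (m + 1)) (c m ^ q * a m * a (m + 1))
        hyne (key2 m hm).symm
      rw [hr]
      exact C.mul_mem (hFC r hrF) (C.mul_mem (C.mul_mem
        (C.pow_mem (hcC m hm (by omega)) _) (haC m hm (by omega)))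
        (haC (m + 1) (by omega) (by omega)))
  -- c i lies in H for all 1 ≤ i ≤ m + 1
  have hcH : ∀ i, 1 ≤ i → i ≤ m + 1 → c i ∈ H := by
    intro i h1 h2
    rcases Nat.lt_or_ge 1 i with hgt | hle
    · -- i ≥ 2
      obtain ⟨j, rfl⟩ : ∃ j, i = j + 1 := ⟨i - 1, by omega⟩
      have hj : 1 ≤ j := by omega
      obtain ⟨r, hrF, hr⟩ := hratio (c (j + 1)) (b j * a (j + 1))
        (mul_ne_zero (hb0 j hj) (ha0 (j + 1) (by omega))) (key1 j hj).symm
      rw [hr]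
      exact H.mul_mem (hFH r hrF) (H.mul_mem (hbH j hj (by omega))
        (haH (j + 1) (by omega) h2))
    · -- i = 1
      have hi : i = 1 := by omega
      subst hi
      have hc1ne : c 1 ≠ 0 := hc0 1 le_rfl
      -- c 1 ^ (q-1) ∈ H
      have hc1Q : c 1 ^ (q - 1) ∈ H := by
        have hmul : c 1 ^ (q - 1) = (a 1 - 1) * (a 1)⁻¹ := by
          rw [eq_mul_inv_iff_mul_eq₀ (ha0 1 le_rfl)]
          exact hR2 1 le_rfl
        rw [hmul]
        exact H.mul_mem (H.sub_mem (haH 1 le_rfl (by omega)) H.one_mem)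
          (H.inv_mem (haH 1 le_rfl (by omega)))
      -- c 1 ^ q ∈ H (uses b 2, needs m + 1 ≥ 2)
      have hc1q : c 1 ^ q ∈ H := by
        obtain ⟨r, hrF, hr⟩ := hratio (c 1 ^ q * a 1 * a 2) (b 2)
          (hb0 2 (by omega)) (key2 1 le_rfl)
        have h2m : (2 : ℕ) ≤ m + 1 := by omega
        have : c 1 ^ q = r * b 2 * (a 1 * a 2)⁻¹ := by
          rw [eq_mul_inv_iff_mul_eq₀ (mul_ne_zero (ha0 1 le_rfl) (ha0 2 (by omega)))]
          linear_combination hr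
        rw [this]
        exact H.mul_mem (H.mul_mem (hFH r hrF) (hbH 2 (by omega) h2m))
          (H.inv_mem (H.mul_mem (haH 1 le_rfl (by omega)) (haH 2 (by omega) h2m)))
      have : c 1 = c 1 ^ q * (c 1 ^ (q - 1))⁻¹ := by
        rw [eq_mul_inv_iff_mul_eq₀ (pow_ne_zero _ hc1ne), ← hpow]
        ring
      rw [this]
      exact H.mul_mem hc1q (H.inv_mem hc1Q)
  -- conclude
  apply le_antisymm
  · rw [hHdef]
    apply Subfield.closure_le.mpr
    rintro x (hx | (⟨i, hi, rfl⟩ | ⟨i, hi, rfl⟩))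
    · exact hFC x hx
    · exact haC i (Set.mem_Icc.mp hi).1 (Set.mem_Icc.mp hi).2
    · exact hbC i (Set.mem_Icc.mp hi).1 (Set.mem_Icc.mp hi).2
  · rw [hCdef]
    apply Subfield.closure_le.mpr
    rintro x (hx | ⟨i, hi, rfl⟩)
    · exact hFH x hx
    · exact hcH i (Set.mem_Icc.mp hi).1 (Set.mem_Icc.mp hi).2
end

section
/- For every integer n ≥ 1, the following identity holds in K: ((c_{n+1}^q − c_{n+1})^{q−1} + 1)·(c_n^{q−1} − 1)^{q−1} = −c_n^{q²−q}. (Equivalently, (c_{n+1}^q − c_{n+1})^{q−1} + 1 = −c_n^{q²−q}/(c_n^{q−1} − 1)^{q−1}, the defining recursion of the Bassa–Garcia–Stichtenoth tower.) -/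
theorem stmt_1
    (p : ℕ) (hp : p.Prime) (e : ℕ) (he : 0 < e) (q : ℕ) (hq : q = p ^ e)
    {K : Type*} [Field K] [CharP K p]
    (a b c : ℕ → K)
    (ha0 : ∀ n, 1 ≤ n → a n ≠ 0)
    (ha1 : ∀ n, 1 ≤ n → a n ≠ 1)
    (ha2 : ∀ n, 1 ≤ n → a n ^ q + a n - 1 ≠ 0)
    (hR1 : ∀ n, 1 ≤ n → (1 - a (n + 1)) * a n = a (n + 1) ^ q * (a n ^ q + a n - 1))
    (hR2 : ∀ n, 1 ≤ n → c n ^ (q - 1) * a n = a n - 1)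
    (hR3 : ∀ n, 1 ≤ n → b n ^ (q - 1) * a n = -(a n ^ q + a n - 1))
    (hb0 : ∀ n, 1 ≤ n → b n ≠ 0)
    (hc0 : ∀ n, 1 ≤ n → c n ≠ 0)
    : ∀ n, 1 ≤ n →
      ((c (n + 1) ^ q - c (n + 1)) ^ (q - 1) + 1) * (c n ^ (q - 1) - 1) ^ (q - 1)
        = -(c n ^ (q ^ 2 - q)) := by
  haveI := Fact.mk hp
  intro n hn
  have hn1 : 1 ≤ n + 1 := by omega
  have hqpos : 1 ≤ q := by rw [hq]; exact Nat.one_le_pow _ _ hp.pos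
  have hq1 : q - 1 + 1 = q := Nat.succ_pred_eq_of_pos hqpos
  have paq : ∀ x : K, x ^ q = x ^ (q - 1) * x := fun x => by rw [← pow_succ, hq1]
  -- (-1)^(q-1) = 1
  have hneg1 : (-1 : K) ^ (q - 1) = 1 := by
    rcases hp.eq_two_or_odd' with h2 | hodd
    · have h : (-1 : K) = 1 := by
        subst h2
        exact CharTwo.neg_eq 1
      rw [h, one_pow]
    · have hoddq : Odd q := hq ▸ hodd.pow
      have heven : Even (q - 1) := Nat.Odd.sub_odd hoddq odd_one
      exact Even.neg_one_pow heven
  -- (c n^{q-1} - 1) * a n = -1 and same at n+1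
  have key1 : (c n ^ (q - 1) - 1) * a n = -1 := by
    linear_combination hR2 n hn
  have key1' : (c (n + 1) ^ (q - 1) - 1) * a (n + 1) = -1 := by
    linear_combination hR2 (n + 1) hn1
  have h1 : (c n ^ (q - 1) - 1) ^ (q - 1) * a n ^ (q - 1) = 1 := by
    rw [← mul_pow, key1, hneg1]
  have h1' : (c (n + 1) ^ (q - 1) - 1) ^ (q - 1) * a (n + 1) ^ (q - 1) = 1 := by
    rw [← mul_pow, key1', hneg1]
  -- e4 : (c'^q - c')^(q-1) * a'^q = a' - 1
  have e4 : (c (n + 1) ^ q - c (n + 1)) ^ (q - 1) * a (n + 1) ^ q = a (n + 1) - 1 := by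
    have step1 : (c (n + 1) ^ q - c (n + 1)) ^ (q - 1) * a (n + 1) ^ q
        = c (n + 1) ^ (q - 1) *
          ((c (n + 1) ^ (q - 1) - 1) ^ (q - 1) * a (n + 1) ^ (q - 1)) * a (n + 1) := by
      have hb : c (n + 1) ^ q - c (n + 1) = c (n + 1) * (c (n + 1) ^ (q - 1) - 1) := by
        rw [paq]; ring
      rw [hb, mul_pow, paq (a (n + 1))]; ring
    rw [step1, h1', mul_one]
    exact hR2 (n + 1) hn1
  -- e5 : (c^{q-1} - 1)^{q-1} * a^q = a
  have e5 : (c n ^ (q - 1) - 1) ^ (q - 1) * a n ^ q = a n := by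
    have step1 : (c n ^ (q - 1) - 1) ^ (q - 1) * a n ^ q
        = ((c n ^ (q - 1) - 1) ^ (q - 1) * a n ^ (q - 1)) * a n := by
      rw [paq (a n)]; ring
    rw [step1, h1, one_mul]
  -- e6 : c^{q^2-q} * a^q = a^q - 1
  have e6 : c n ^ (q ^ 2 - q) * a n ^ q = a n ^ q - 1 := by
    have hexp : q ^ 2 - q = (q - 1) * q := by
      rw [Nat.sub_mul, one_mul, sq]
    have hfrob : (a n - 1) ^ q = a n ^ q - 1 := by
      rw [hq]
      rw [sub_pow_char_pow]
      rw [one_pow]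
    rw [hexp, pow_mul, ← mul_pow, hR2 n hn, hfrob]
  have hAq : a n ^ q * a (n + 1) ^ q ≠ 0 :=
    mul_ne_zero (pow_ne_zero _ (ha0 n hn)) (pow_ne_zero _ (ha0 _ hn1))
  apply mul_right_cancel₀ hAq
  linear_combination ((c n ^ (q - 1) - 1) ^ (q - 1) * a n ^ q) * e4
    + ((a (n + 1) - 1) + a (n + 1) ^ q) * e5 + a (n + 1) ^ q * e6 - hR1 n hn
end

section
/- For every integer n ≥ 1, the following identity holds in K: (a_{n+1}·b_n)^q − (a_{n+1}·b_n) = −b_n. -/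
theorem stmt_2
    (p : ℕ) (hp : p.Prime) (e : ℕ) (he : 0 < e) (q : ℕ) (hq : q = p ^ e)
    {K : Type*} [Field K] [CharP K p]
    (a b c : ℕ → K)
    (ha0 : ∀ n, 1 ≤ n → a n ≠ 0)
    (ha1 : ∀ n, 1 ≤ n → a n ≠ 1)
    (ha2 : ∀ n, 1 ≤ n → a n ^ q + a n - 1 ≠ 0)
    (hR1 : ∀ n, 1 ≤ n → (1 - a (n + 1)) * a n = a (n + 1) ^ q * (a n ^ q + a n - 1))
    (hR2 : ∀ n, 1 ≤ n → c n ^ (q - 1) * a n = a n - 1)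
    (hR3 : ∀ n, 1 ≤ n → b n ^ (q - 1) * a n = -(a n ^ q + a n - 1))
    (hb0 : ∀ n, 1 ≤ n → b n ≠ 0)
    (hc0 : ∀ n, 1 ≤ n → c n ≠ 0)
    : ∀ n, 1 ≤ n →
      (a (n + 1) * b n) ^ q - a (n + 1) * b n = -(b n) := by
  intro n hn
  have hq1 : 1 ≤ q := by
    rw [hq]; exact Nat.one_le_pow _ _ hp.pos
  have hbq : b n ^ q = b n ^ (q - 1) * b n := by
    rw [← pow_succ]; congr 1; omega
  have key : a (n + 1) ^ q * b n ^ (q - 1) = a (n + 1) - 1 := by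
    apply mul_right_cancel₀ (ha0 n hn)
    linear_combination a (n + 1) ^ q * hR3 n hn + hR1 n hn
  rw [mul_pow, hbq]
  linear_combination b n * key
end

section
/- For every integer n ≥ 2, the following identity holds in K: c_n^{q−1} = a_n^{q−1}·b_{n−1}^{q−1}; that is, c_n^{q−1} = (a_n·b_{n−1})^{q−1}. -/
theorem stmt_3
    (p : ℕ) (hp : p.Prime) (e : ℕ) (he : 0 < e) (q : ℕ) (hq : q = p ^ e)
    {K : Type*} [Field K] [CharP K p]
    (a b c : ℕ → K)
    (ha0 : ∀ n, 1 ≤ n → a n ≠ 0)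
    (ha1 : ∀ n, 1 ≤ n → a n ≠ 1)
    (ha2 : ∀ n, 1 ≤ n → a n ^ q + a n - 1 ≠ 0)
    (hR1 : ∀ n, 1 ≤ n → (1 - a (n + 1)) * a n = a (n + 1) ^ q * (a n ^ q + a n - 1))
    (hR2 : ∀ n, 1 ≤ n → c n ^ (q - 1) * a n = a n - 1)
    (hR3 : ∀ n, 1 ≤ n → b n ^ (q - 1) * a n = -(a n ^ q + a n - 1))
    (hb0 : ∀ n, 1 ≤ n → b n ≠ 0)
    (hc0 : ∀ n, 1 ≤ n → c n ≠ 0)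
    : ∀ n, 2 ≤ n →
      c n ^ (q - 1) = a n ^ (q - 1) * b (n - 1) ^ (q - 1) := by
  intro n hn
  obtain ⟨m, rfl⟩ : ∃ m, n = m + 1 := ⟨n - 1, by omega⟩
  have hm : 1 ≤ m := by omega
  have hq2 : 2 ≤ q := by
    rw [hq]
    calc 2 = 2 ^ 1 := rfl
    _ ≤ p ^ e := Nat.pow_le_pow_left hp.two_le e |>.trans' (Nat.pow_le_pow_right (by norm_num) he) |>.trans (le_refl _)
  have hpow : a (m + 1) ^ (q - 1) * a (m + 1) = a (m + 1) ^ q := by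
    rw [← pow_succ]; congr 1; omega
  have h1 := hR1 m hm
  have h2 := hR2 (m + 1) (by omega)
  have h3 := hR3 m hm
  have hA := ha0 (m + 1) (by omega)
  have hB := ha0 m hm
  rw [← hpow] at h1
  have key : c (m + 1) ^ (q - 1) * (a (m + 1) * a m)
      = (a (m + 1) ^ (q - 1) * b ((m + 1) - 1) ^ (q - 1)) * (a (m + 1) * a m) := by
    simp only [Nat.add_sub_cancel]
    linear_combination (a m) * h2 - h1 - (a (m + 1) ^ (q - 1) * a (m + 1)) * h3
  exact mul_right_cancel₀ (mul_ne_zero hA hB) key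
end

section
/- For every integer n ≥ 2, the following identity holds in K: b_n^{q−1} = a_n^{q−1}·(a_{n−1} − 1)^{q−1}·c_{n−1}^{q−1}; that is, b_n^{q−1} = (a_n·(a_{n−1} − 1)·c_{n−1})^{q−1}. -/
theorem stmt_4
    (p : ℕ) (hp : p.Prime) (e : ℕ) (he : 0 < e) (q : ℕ) (hq : q = p ^ e)
    {K : Type*} [Field K] [CharP K p]
    (a b c : ℕ → K)
    (ha0 : ∀ n, 1 ≤ n → a n ≠ 0)
    (ha1 : ∀ n, 1 ≤ n → a n ≠ 1)
    (ha2 : ∀ n, 1 ≤ n → a n ^ q + a n - 1 ≠ 0)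
    (hR1 : ∀ n, 1 ≤ n → (1 - a (n + 1)) * a n = a (n + 1) ^ q * (a n ^ q + a n - 1))
    (hR2 : ∀ n, 1 ≤ n → c n ^ (q - 1) * a n = a n - 1)
    (hR3 : ∀ n, 1 ≤ n → b n ^ (q - 1) * a n = -(a n ^ q + a n - 1))
    (hb0 : ∀ n, 1 ≤ n → b n ≠ 0)
    (hc0 : ∀ n, 1 ≤ n → c n ≠ 0)
    : ∀ n, 2 ≤ n →
      b n ^ (q - 1) = a n ^ (q - 1) * (a (n - 1) - 1) ^ (q - 1) * c (n - 1) ^ (q - 1) := by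
  intro n hn
  obtain ⟨m, rfl⟩ : ∃ m, n = m + 1 := ⟨n - 1, (Nat.succ_pred_eq_of_pos (by omega)).symm⟩
  have hm : 1 ≤ m := by omega
  have hm1 : 1 ≤ m + 1 := by omega
  simp only [Nat.add_sub_cancel]
  have hq1 : 1 ≤ q := by
    subst hq; exact Nat.one_le_pow _ _ hp.pos
  have hqq : q - 1 + 1 = q := by omega
  have hpow : ∀ x : K, x ^ (q - 1) * x = x ^ q := by
    intro x; rw [← pow_succ, hqq]
  haveI := Fact.mk hp
  have hfrob : (a m - 1) ^ q = a m ^ q - 1 := by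
    subst hq
    rw [sub_pow_char_pow, one_pow]
  have ham := ha0 m hm
  have han := ha0 (m + 1) hm1
  have key : -(a (m + 1) ^ q + a (m + 1) - 1) * a m = a (m + 1) ^ q * (a m ^ q - 1) := by
    linear_combination hR1 m hm
  apply mul_right_cancel₀ (b := a (m + 1) * a m) (mul_ne_zero han ham)
  calc b (m + 1) ^ (q - 1) * (a (m + 1) * a m)
      = (b (m + 1) ^ (q - 1) * a (m + 1)) * a m := by ring
    _ = -(a (m + 1) ^ q + a (m + 1) - 1) * a m := by rw [hR3 (m + 1) hm1]
    _ = a (m + 1) ^ q * (a m ^ q - 1) := key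
    _ = a (m + 1) ^ q * ((a m - 1) ^ (q - 1) * (a m - 1)) := by
        rw [hpow (a m - 1), hfrob]
    _ = (a (m + 1) ^ (q - 1) * a (m + 1)) * ((a m - 1) ^ (q - 1) * (c m ^ (q - 1) * a m)) := by
        rw [hpow (a (m + 1)), hR2 m hm]
    _ = a (m + 1) ^ (q - 1) * (a m - 1) ^ (q - 1) * c m ^ (q - 1) * (a (m + 1) * a m) := by
        ring
end

section
/- For every integer n ≥ 2, the subfield of K generated by F and c_n equals the subfield of K generated by F and the two elements b_{n−1}, a_n; that is, F(c_n) = F(b_{n−1}, a_n). -/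
open Polynomial

namespace Subfield

variable {K : Type*} [Field K] (F : Subfield K) [Finite F]

theorem mem_iff_pow_card_eq_self {x : K} : x ∈ F ↔ x ^ Nat.card F = x := by
  classical
  have := Fintype.ofFinite F
  rw [Nat.card_eq_fintype_card]
  refine ⟨fun hx ↦ congrArg Subtype.val (FiniteField.pow_card (⟨x, hx⟩ : F)), fun hx ↦ ?_⟩
  set P : F[X] := X ^ Fintype.card F - X
  have hP : P.map F.subtype ≠ 0 := by
    simpa [P] using FiniteField.X_pow_card_sub_X_ne_zero K Fintype.one_lt_card
  -- `P` has all `#F` elements of `F` as roots, so its roots in `K` are already in `F`.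
  have hroots : P.roots.map F.subtype = (P.map F.subtype).roots :=
    roots_map_of_injective_of_card_eq_natDegree F.subtype.injective <| by
      rw [FiniteField.roots_X_pow_card_sub_X, FiniteField.X_pow_card_sub_X_natDegree_eq _
        Fintype.one_lt_card, Finset.card_val, Finset.card_univ]
  have hxroot : x ∈ (P.map F.subtype).roots := by
    rw [mem_roots hP]
    simp [P, hx]
  obtain ⟨y, -, rfl⟩ := Multiset.mem_map.mp (hroots ▸ hxroot)
  exact y.2

theorem mem_of_pow_eq_one {k : ℕ} (hk : k ∣ Nat.card F - 1) {x : K} (hx : x ^ k = 1) :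
    x ∈ F := by
  obtain ⟨j, hj⟩ := hk
  rw [mem_iff_pow_card_eq_self, ← Nat.sub_add_cancel Nat.card_pos, pow_succ, hj, pow_mul, hx,
    one_pow, one_mul]

theorem div_mem_of_pow_eq_pow {k : ℕ} (hk : k ∣ Nat.card F - 1) {u v : K} (hv : v ≠ 0)
    (h : u ^ k = v ^ k) : u / v ∈ F :=
  F.mem_of_pow_eq_one hk <| by rw [div_pow, h, div_self (pow_ne_zero k hv)]

end Subfield

section fieldAdjoin

variable {K : Type*} [Field K] {F : Subfield K} {S : Set K}

theorem le_fieldAdjoin : F ≤ fieldAdjoin F S :=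
  fun _ hx ↦ Subfield.subset_closure (Or.inl hx)

theorem subset_fieldAdjoin : S ⊆ fieldAdjoin F S :=
  fun _ hx ↦ Subfield.subset_closure (Or.inr hx)

theorem fieldAdjoin_le_iff {T : Subfield K} : fieldAdjoin F S ≤ T ↔ F ≤ T ∧ S ⊆ T := by
  rw [fieldAdjoin, Subfield.closure_le, Set.union_subset_iff, SetLike.coe_subset_coe]

theorem fieldAdjoin_singleton_eq_pair {z a b c : K} (hz : z ∈ F) (hc : c = z * (a * b))
    (hc0 : c ≠ 0) (ha : a ∈ fieldAdjoin F {c}) : fieldAdjoin F {c} = fieldAdjoin F {b, a} := by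
  have hza : z * a ≠ 0 := by
    rintro h
    exact hc0 (by rw [hc, ← mul_assoc, h, zero_mul])
  have hb : b = c / (z * a) := by
    rw [eq_div_iff hza, hc]
    ring
  have hcmem : c ∈ fieldAdjoin F {c} := subset_fieldAdjoin (Set.mem_singleton c)
  apply le_antisymm
  · refine fieldAdjoin_le_iff.mpr ⟨le_fieldAdjoin, Set.singleton_subset_iff.mpr ?_⟩
    rw [hc]
    exact mul_mem (le_fieldAdjoin hz) <| mul_mem (subset_fieldAdjoin (Set.mem_insert_of_mem _ rfl))
      (subset_fieldAdjoin (Set.mem_insert _ _))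
  · refine fieldAdjoin_le_iff.mpr ⟨le_fieldAdjoin, Set.insert_subset_iff.mpr ⟨?_, ?_⟩⟩
    · rw [hb]
      exact div_mem hcmem (mul_mem (le_fieldAdjoin hz) ha)
    · exact Set.singleton_subset_iff.mpr ha

theorem inv_one_sub_pow_mem_fieldAdjoin_singleton (c : K) (k : ℕ) :
    (1 - c ^ k)⁻¹ ∈ fieldAdjoin F {c} :=
  inv_mem <| sub_mem (one_mem _) <| pow_mem (subset_fieldAdjoin (Set.mem_singleton c)) k

end fieldAdjoin

/-- `(R1)` at `n - 1`, `(R2)` at `n` and `(R3)` at `n - 1`, with `a = aₙ₋₁`, `a' = aₙ`, `b = bₙ₋₁`,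
`c = cₙ`. -/
theorem pow_pred_eq_mul_pow_pred_of_relations {K : Type*} [Field K] {q : ℕ} (hq : 1 ≤ q)
    {a a' b c : K} (ha : a ≠ 0) (ha' : a' ≠ 0)
    (h1 : (1 - a') * a = a' ^ q * (a ^ q + a - 1)) (h2 : c ^ (q - 1) * a' = a' - 1)
    (h3 : b ^ (q - 1) * a = -(a ^ q + a - 1)) :
    c ^ (q - 1) = (a' * b) ^ (q - 1) := by
  obtain ⟨k, rfl⟩ : ∃ k, q = k + 1 := ⟨q - 1, by omega⟩
  simp only [Nat.add_sub_cancel] at h2 h3 ⊢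
  apply mul_right_cancel₀ (mul_ne_zero ha' ha)
  linear_combination a * h2 - h1 - a' ^ (k + 1) * h3

theorem stmt_7_general
    (q : ℕ)
    {K : Type*} [Field K]
    (a b c : ℕ → K)
    (ha0 : ∀ n, 1 ≤ n → a n ≠ 0)
    (hR1 : ∀ n, 1 ≤ n → (1 - a (n + 1)) * a n = a (n + 1) ^ q * (a n ^ q + a n - 1))
    (hR2 : ∀ n, 1 ≤ n → c n ^ (q - 1) * a n = a n - 1)
    (hR3 : ∀ n, 1 ≤ n → b n ^ (q - 1) * a n = -(a n ^ q + a n - 1))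
    (hb0 : ∀ n, 1 ≤ n → b n ≠ 0)
    (hc0 : ∀ n, 1 ≤ n → c n ≠ 0)
    (F : Subfield K) (hFfin : Finite F) (hFcard : Nat.card F = q ^ 3)
    : ∀ n, 2 ≤ n →
      fieldAdjoin F {c n} = fieldAdjoin F {b (n - 1), a n} := by
  intro n hn
  obtain ⟨m, hm, rfl⟩ : ∃ m, 1 ≤ m ∧ n = m + 1 := ⟨n - 1, by omega, by omega⟩
  rw [Nat.add_sub_cancel]
  have hq1 : 1 ≤ q := Nat.pos_of_ne_zero <| by
    rintro rfl
    simp [Nat.card_pos.ne'] at hFcard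
  have hab : a (m + 1) * b m ≠ 0 := mul_ne_zero (ha0 _ (by omega)) (hb0 m hm)
  have hpow := pow_pred_eq_mul_pow_pred_of_relations hq1 (ha0 m hm) (ha0 _ (by omega))
    (hR1 m hm) (hR2 _ (by omega)) (hR3 m hm)
  have hz : c (m + 1) / (a (m + 1) * b m) ∈ F :=
    F.div_mem_of_pow_eq_pow (hFcard ▸ by simpa using Nat.sub_dvd_pow_sub_pow q 1 3) hab hpow
  have ha : a (m + 1) = (1 - c (m + 1) ^ (q - 1))⁻¹ :=
    eq_inv_of_mul_eq_one_left (by linear_combination -hR2 (m + 1) (by omega))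
  exact fieldAdjoin_singleton_eq_pair hz (div_mul_cancel₀ _ hab).symm (hc0 _ (by omega))
    (ha ▸ inv_one_sub_pow_mem_fieldAdjoin_singleton _ _)

theorem stmt_7
    (p : ℕ) (hp : p.Prime) (e : ℕ) (he : 0 < e) (q : ℕ) (hq : q = p ^ e)
    {K : Type*} [Field K] [CharP K p]
    (a b c : ℕ → K)
    (ha0 : ∀ n, 1 ≤ n → a n ≠ 0)
    (ha1 : ∀ n, 1 ≤ n → a n ≠ 1)
    (ha2 : ∀ n, 1 ≤ n → a n ^ q + a n - 1 ≠ 0)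
    (hR1 : ∀ n, 1 ≤ n → (1 - a (n + 1)) * a n = a (n + 1) ^ q * (a n ^ q + a n - 1))
    (hR2 : ∀ n, 1 ≤ n → c n ^ (q - 1) * a n = a n - 1)
    (hR3 : ∀ n, 1 ≤ n → b n ^ (q - 1) * a n = -(a n ^ q + a n - 1))
    (hb0 : ∀ n, 1 ≤ n → b n ≠ 0)
    (hc0 : ∀ n, 1 ≤ n → c n ≠ 0)
    (F : Subfield K) (hFfin : Finite F) (hFcard : Nat.card F = q ^ 3)
    : ∀ n, 2 ≤ n →
      fieldAdjoin F {c n} = fieldAdjoin F {b (n - 1), a n} :=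
  stmt_7_general q a b c ha0 hR1 hR2 hR3 hb0 hc0 F hFfin hFcard
end

section
/- For every integer n ≥ 2, the subfield of K generated by F and the elements c_{n−1}, a_n equals the subfield of K generated by F and the elements b_n, a_n, a_{n−1}; that is, F(c_{n−1}, a_n) = F(b_n, a_n, a_{n−1}). -/
lemma mem_subfield_of_pow_card {K : Type*} [Field K] (F : Subfield K) [Finite F]
    (N : ℕ) (hN : 1 < N) (hcard : Nat.card F = N) (z : K) (hz : z ^ N = z) : z ∈ F := by
  classical
  have : Fintype F := Fintype.ofFinite F
  set f : Polynomial K := Polynomial.X ^ N - Polynomial.X with hf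
  have hf0 : f ≠ 0 := by
    intro h
    have : f.coeff N = 0 := by rw [h]; simp
    rw [hf] at this
    rw [Polynomial.coeff_sub, Polynomial.coeff_X_pow, Polynomial.coeff_X,
      if_pos rfl, if_neg (by omega : ¬ (1 : ℕ) = N)] at this
    norm_num at this
  have hdeg : f.natDegree ≤ N := by
    refine le_trans (Polynomial.natDegree_sub_le _ _) ?_
    simp [Polynomial.natDegree_X_pow, Polynomial.natDegree_X]
    omega
  have hFin : (F : Set K).Finite := Set.toFinite _
  set Fs : Finset K := hFin.toFinset with hFs
  have hFscard : Fs.card = N := by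
    rw [hFs, Set.Finite.card_toFinset]
    show Fintype.card (F : Set K) = N
    rw [← Nat.card_eq_fintype_card]; exact hcard
  have hroot : ∀ x : K, x ∈ F → x ^ N = x := by
    intro x hx
    have hcF : Fintype.card F = N := by rw [← Nat.card_eq_fintype_card, hcard]
    have := FiniteField.pow_card (⟨x, hx⟩ : F)
    rw [hcF] at this
    exact congrArg Subtype.val this
  have hsub : Fs ⊆ f.roots.toFinset := by
    intro x hx
    rw [Multiset.mem_toFinset, Polynomial.mem_roots hf0]
    have hxF : x ∈ F := by rw [hFs, Set.Finite.mem_toFinset] at hx; exact hx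
    simp [Polynomial.IsRoot, hf, hroot x hxF]
  have hTcard : f.roots.toFinset.card ≤ N :=
    le_trans (Multiset.toFinset_card_le _) (le_trans (Polynomial.card_roots' f) hdeg)
  have heq : Fs = f.roots.toFinset :=
    Finset.eq_of_subset_of_card_le hsub (by omega)
  have hzT : z ∈ f.roots.toFinset := by
    rw [Multiset.mem_toFinset, Polynomial.mem_roots hf0]
    simp [Polynomial.IsRoot, hf, hz]
  rw [← heq, hFs, Set.Finite.mem_toFinset] at hzT
  exact hzT


theorem stmt_8
    (p : ℕ) (hp : p.Prime) (e : ℕ) (he : 0 < e) (q : ℕ) (hq : q = p ^ e)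
    {K : Type*} [Field K] [CharP K p]
    (a b c : ℕ → K)
    (ha0 : ∀ n, 1 ≤ n → a n ≠ 0)
    (ha1 : ∀ n, 1 ≤ n → a n ≠ 1)
    (ha2 : ∀ n, 1 ≤ n → a n ^ q + a n - 1 ≠ 0)
    (hR1 : ∀ n, 1 ≤ n → (1 - a (n + 1)) * a n = a (n + 1) ^ q * (a n ^ q + a n - 1))
    (hR2 : ∀ n, 1 ≤ n → c n ^ (q - 1) * a n = a n - 1)
    (hR3 : ∀ n, 1 ≤ n → b n ^ (q - 1) * a n = -(a n ^ q + a n - 1))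
    (hb0 : ∀ n, 1 ≤ n → b n ≠ 0)
    (hc0 : ∀ n, 1 ≤ n → c n ≠ 0)
    (F : Subfield K) (hFfin : Finite F) (hFcard : Nat.card F = q ^ 3)
    : ∀ n, 2 ≤ n →
      fieldAdjoin F {c (n - 1), a n} = fieldAdjoin F {b n, a n, a (n - 1)} := by
  haveI := Fact.mk hp
  have hq2 : 2 ≤ q := by
    rw [hq]
    exact le_trans hp.two_le (Nat.le_self_pow (by omega) p)
  intro n hn
  obtain ⟨m, rfl⟩ : ∃ m, n = m + 1 := ⟨n - 1, by omega⟩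
  have hm : 1 ≤ m := by omega
  simp only [Nat.add_sub_cancel]
  -- abbreviations
  set A := a (m + 1) with hAdef
  set B := a m with hBdef
  set C := c m with hCdef
  set bb := b (m + 1) with hbbdef
  obtain ⟨Q, rfl⟩ : ∃ Q, q = Q + 1 := ⟨q - 1, by omega⟩
  simp only [Nat.add_sub_cancel] at hR2 hR3
  have hA0 : A ≠ 0 := ha0 (m + 1) (by omega)
  have hB0 : B ≠ 0 := ha0 m hm
  have hB1 : B - 1 ≠ 0 := sub_ne_zero.mpr (ha1 m hm)
  have hC0 : C ≠ 0 := hc0 m hm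
  have hbb0 : bb ≠ 0 := hb0 (m + 1) (by omega)
  have hR1' : (1 - A) * B = A ^ (Q + 1) * (B ^ (Q + 1) + B - 1) := hR1 m hm
  have hR2' : C ^ Q * B = B - 1 := hR2 m hm
  have hR3' : bb ^ Q * A = -(A ^ (Q + 1) + A - 1) := hR3 (m + 1) (by omega)
  have hfrob : (B - 1) ^ (Q + 1) = B ^ (Q + 1) - 1 := by
    rw [hq]
    simpa using sub_pow_char_pow B 1 e
  -- key identity
  have hK1 : -(A ^ (Q + 1) + A - 1) * B = A ^ (Q + 1) * (B ^ (Q + 1) - 1) := by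
    linear_combination hR1'
  have h2 : (C ^ Q) ^ (Q + 1) * B ^ (Q + 1) = B ^ (Q + 1) - 1 := by
    rw [← mul_pow, hR2', hfrob]
  have hKey : bb ^ Q = (A * B * C ^ (Q + 1)) ^ Q := by
    have hne : A * B ^ (Q + 1) ≠ 0 := mul_ne_zero hA0 (pow_ne_zero _ hB0)
    apply mul_right_cancel₀ hne
    calc bb ^ Q * (A * B ^ (Q + 1))
        = (bb ^ Q * A) * B ^ (Q + 1) := by ring
      _ = -(A ^ (Q + 1) + A - 1) * B ^ (Q + 1) := by rw [hR3']
      _ = (-(A ^ (Q + 1) + A - 1) * B) * B ^ Q := by ring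
      _ = (A ^ (Q + 1) * (B ^ (Q + 1) - 1)) * B ^ Q := by rw [hK1]
      _ = (A ^ (Q + 1) * ((C ^ Q) ^ (Q + 1) * B ^ (Q + 1))) * B ^ Q := by rw [h2]
      _ = (A * B * C ^ (Q + 1)) ^ Q * (A * B ^ (Q + 1)) := by ring
  -- the unit z
  set u : K := A * B * C ^ (Q + 1) with hu
  have hu0 : u ≠ 0 := mul_ne_zero (mul_ne_zero hA0 hB0) (pow_ne_zero _ hC0)
  set z : K := bb / u with hz
  have hzu : z * u = bb := div_mul_cancel₀ bb hu0
  have hz0 : z ≠ 0 := by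
    intro h; rw [h, zero_mul] at hzu; exact hbb0 hzu.symm
  have hzQ : z ^ Q = 1 := by
    rw [hz, div_pow, hKey]
    exact div_self (pow_ne_zero _ hu0)
  have hzF : z ∈ F := by
    refine mem_subfield_of_pow_card F ((Q + 1) ^ 3) ?_ hFcard z ?_
    · exact Nat.one_lt_pow (by omega) (by omega)
    · have h3 : (Q + 1) ^ 3 = Q * ((Q + 1) ^ 2 + (Q + 1) + 1) + 1 := by ring
      rw [h3, pow_add, pow_mul, hzQ, one_pow, pow_one, one_mul]
  -- memberships
  set E1 := fieldAdjoin F ({C, A} : Set K) with hE1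
  set E2 := fieldAdjoin F ({bb, A, B} : Set K) with hE2
  have hF1 : ∀ x : K, x ∈ F → x ∈ E1 := fun x hx =>
    Subfield.subset_closure (Set.mem_union_left _ hx)
  have hF2 : ∀ x : K, x ∈ F → x ∈ E2 := fun x hx =>
    Subfield.subset_closure (Set.mem_union_left _ hx)
  have hCE1 : C ∈ E1 := Subfield.subset_closure (Set.mem_union_right _ (by simp))
  have hAE1 : A ∈ E1 := Subfield.subset_closure (Set.mem_union_right _ (by simp))
  have hbE2 : bb ∈ E2 := Subfield.subset_closure (Set.mem_union_right _ (by simp))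
  have hAE2 : A ∈ E2 := Subfield.subset_closure (Set.mem_union_right _ (by simp))
  have hBE2 : B ∈ E2 := Subfield.subset_closure (Set.mem_union_right _ (by simp))
  -- B ∈ E1
  have hBinv : B * (1 - C ^ Q) = 1 := by linear_combination -hR2'
  have hBE1 : B ∈ E1 := by
    have h1 : (1 - C ^ Q) ∈ E1 := E1.sub_mem E1.one_mem (E1.pow_mem hCE1 Q)
    have : B = (1 - C ^ Q)⁻¹ := eq_inv_of_mul_eq_one_left hBinv
    rw [this]
    exact E1.inv_mem h1
  -- bb ∈ E1
  have hbE1 : bb ∈ E1 := by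
    rw [← hzu]
    exact E1.mul_mem (hF1 z hzF)
      (E1.mul_mem (E1.mul_mem hAE1 hBE1) (E1.pow_mem hCE1 (Q + 1)))
  -- C ∈ E2
  have hCeq : C * (z * A * (B - 1)) = bb := by
    rw [← hzu, hu]
    linear_combination (-(z * A * C)) * hR2'
  have hCE2 : C ∈ E2 := by
    have hne : z * A * (B - 1) ≠ 0 := mul_ne_zero (mul_ne_zero hz0 hA0) hB1
    have h1 : (z * A * (B - 1)) ∈ E2 :=
      E2.mul_mem (E2.mul_mem (hF2 z hzF) hAE2) (E2.sub_mem hBE2 E2.one_mem)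
    have : C = bb * (z * A * (B - 1))⁻¹ := by
      field_simp
      linear_combination hCeq
    rw [this]
    exact E2.mul_mem hbE2 (E2.inv_mem h1)
  -- conclude
  refine le_antisymm ?_ ?_
  · rw [hE1]
    refine Subfield.closure_le.mpr (Set.union_subset (fun x hx => hF2 x hx) ?_)
    rw [Set.insert_subset_iff, Set.singleton_subset_iff]
    exact ⟨hCE2, hAE2⟩
  · rw [hE2]
    refine Subfield.closure_le.mpr (Set.union_subset (fun x hx => hF1 x hx) ?_)
    rw [Set.insert_subset_iff, Set.insert_subset_iff, Set.singleton_subset_iff]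
    exact ⟨hbE1, hAE1, hBE1⟩
end

section
/- For every integer n ≥ 2, the subfield of K generated by F and the elements c_2, c_3, …, c_n equals the subfield of K generated by F and the elements b_1, a_2, b_2, a_3, …, b_{n−1}, a_n; that is, F(c_2, …, c_n) = F(b_1, a_2, b_2, a_3, …, b_{n−1}, a_n). -/
/-- A finite subfield with `m` elements consists exactly of the roots of `X^m - X`;
in particular any `u` with `u ^ m = u` lies in it. -/
lemma mem_subfield_of_pow_eq {K : Type*} [Field K] (F : Subfield K) (hF : Finite F)
    (m : ℕ) (hm : 2 ≤ m) (hcard : Nat.card F = m)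
    {u : K} (hu : u ^ m = u) : u ∈ F := by
  classical
  haveI : Fintype F := Fintype.ofFinite F
  by_contra hu'
  set P : Polynomial K := Polynomial.X ^ m - Polynomial.X with hP
  have hmonic : P.Monic := by
    apply Polynomial.monic_X_pow_sub
    calc Polynomial.degree (Polynomial.X : Polynomial K) = 1 := Polynomial.degree_X
    _ < (m : WithBot ℕ) := by exact_mod_cast hm
  have hdeg : P.natDegree ≤ m := by
    have h := Polynomial.natDegree_sub_le (Polynomial.X ^ m : Polynomial K) Polynomial.X
    rw [Polynomial.natDegree_X_pow, Polynomial.natDegree_X] at h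
    exact h.trans (by omega)
  have hroot : ∀ x : K, x ^ m = x → x ∈ P.roots.toFinset := by
    intro x hx
    rw [Multiset.mem_toFinset, Polynomial.mem_roots hmonic.ne_zero]
    simp [hP, Polynomial.IsRoot, sub_eq_zero, hx]
  have hFroot : ∀ x : K, x ∈ F → x ∈ P.roots.toFinset := by
    intro x hx
    apply hroot
    have h := FiniteField.pow_card (⟨x, hx⟩ : F)
    rw [← Nat.card_eq_fintype_card, hcard] at h
    simpa using congrArg (Subtype.val) h
  set S : Finset K := insert u (Finset.univ.image (fun x : F => (x : K))) with hS
  have hSsub : S ⊆ P.roots.toFinset := by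
    intro x hx
    rw [hS, Finset.mem_insert] at hx
    rcases hx with rfl | hx
    · exact hroot x hu
    · obtain ⟨y, _, rfl⟩ := Finset.mem_image.mp hx
      exact hFroot _ y.2
  have hScard : S.card = m + 1 := by
    rw [hS, Finset.card_insert_of_notMem, Finset.card_image_of_injective _ Subtype.val_injective,
      Finset.card_univ, ← Nat.card_eq_fintype_card, hcard]
    intro hmem
    obtain ⟨y, _, hy⟩ := Finset.mem_image.mp hmem
    exact hu' (hy ▸ y.2)
  have h1 : S.card ≤ P.roots.toFinset.card := Finset.card_le_card hSsub
  have h2 : P.roots.toFinset.card ≤ Multiset.card P.roots := Multiset.toFinset_card_le _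
  have h3 := Polynomial.card_roots' P
  omega

theorem stmt_9
    (p : ℕ) (hp : p.Prime) (e : ℕ) (he : 0 < e) (q : ℕ) (hq : q = p ^ e)
    {K : Type*} [Field K] [CharP K p]
    (a b c : ℕ → K)
    (ha0 : ∀ n, 1 ≤ n → a n ≠ 0)
    (ha1 : ∀ n, 1 ≤ n → a n ≠ 1)
    (ha2 : ∀ n, 1 ≤ n → a n ^ q + a n - 1 ≠ 0)
    (hR1 : ∀ n, 1 ≤ n → (1 - a (n + 1)) * a n = a (n + 1) ^ q * (a n ^ q + a n - 1))
    (hR2 : ∀ n, 1 ≤ n → c n ^ (q - 1) * a n = a n - 1)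
    (hR3 : ∀ n, 1 ≤ n → b n ^ (q - 1) * a n = -(a n ^ q + a n - 1))
    (hb0 : ∀ n, 1 ≤ n → b n ≠ 0)
    (hc0 : ∀ n, 1 ≤ n → c n ≠ 0)
    (F : Subfield K) (hFfin : Finite F) (hFcard : Nat.card F = q ^ 3)
    : ∀ n, 2 ≤ n →
      fieldAdjoin F (c '' Set.Icc 2 n)
        = fieldAdjoin F (b '' Set.Icc 1 (n - 1) ∪ a '' Set.Icc 2 n) := by
  intro n hn
  have hq2 : 2 ≤ q := by
    rw [hq]
    exact Nat.one_lt_pow (by omega) hp.one_lt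
  obtain ⟨r, hr⟩ : ∃ r, q = r + 1 := ⟨q - 1, by omega⟩
  have hr' : q - 1 = r := by omega
  -- key: c (m+1) = u * (b m * a (m+1)) with u ∈ F, u ≠ 0
  have hu : ∀ m, 1 ≤ m → ∃ u : K, u ∈ F ∧ u ≠ 0 ∧ c (m+1) = u * (b m * a (m+1)) := by
    intro m hm
    have hb : b m ≠ 0 := hb0 m hm
    have ha' : a (m+1) ≠ 0 := ha0 (m+1) (by omega)
    have ha : a m ≠ 0 := ha0 m hm
    have hba : b m * a (m+1) ≠ 0 := mul_ne_zero hb ha'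
    have h1 := hR2 (m+1) (by omega)
    have h2 := hR3 m hm
    have h3 := hR1 m hm
    rw [hr'] at h1 h2
    rw [hr] at h2 h3
    simp only [pow_succ] at h2 h3
    have key : c (m+1) ^ r = (b m * a (m+1)) ^ r := by
      apply mul_right_cancel₀ (mul_ne_zero ha' ha)
      rw [mul_pow]
      linear_combination (a m) * h1 - (a (m+1))^r * a (m+1) * h2 - h3
    have hw : (c (m+1) * (b m * a (m+1))⁻¹) ^ r = 1 := by
      rw [mul_pow, key, inv_pow, mul_inv_cancel₀ (pow_ne_zero r hba)]
    refine ⟨c (m+1) * (b m * a (m+1))⁻¹, ?_, ?_, ?_⟩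
    · apply mem_subfield_of_pow_eq F hFfin (q ^ 3) (hq2.trans (Nat.le_self_pow (by omega) q)) hFcard
      rw [hr, show (r+1)^3 = 1 + r * ((r+1)^2 + (r+1) + 1) from by ring,
        pow_add, pow_one, pow_mul, hw, one_pow, mul_one]
    · exact mul_ne_zero (hc0 (m+1) (by omega)) (inv_ne_zero hba)
    · exact (inv_mul_cancel_right₀ hba _).symm
  -- a k lies in F(c's)
  have hamem : ∀ k, 2 ≤ k → k ≤ n → a k ∈ fieldAdjoin F (c '' Set.Icc 2 n) := by
    intro k h2 hkn
    have hck : c k ∈ fieldAdjoin F (c '' Set.Icc 2 n) :=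
      Subfield.subset_closure (Set.mem_union_right _
        (Set.mem_image_of_mem c (Set.mem_Icc.mpr ⟨h2, hkn⟩)))
    have h1 := hR2 k (by omega)
    have hak : a k * (1 - c k ^ (q-1)) = 1 := by
      rw [hr'] at h1 ⊢
      linear_combination -h1
    rw [eq_inv_of_mul_eq_one_left hak]
    exact Subfield.inv_mem _ (Subfield.sub_mem _ (Subfield.one_mem _)
      (Subfield.pow_mem _ hck _))
  apply le_antisymm
  · rw [fieldAdjoin, Subfield.closure_le]
    rintro x (hx | hx)
    · exact Subfield.subset_closure (Set.mem_union_left _ hx)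
    · obtain ⟨k, hk, rfl⟩ := hx
      rw [Set.mem_Icc] at hk
      obtain ⟨m, rfl⟩ : ∃ m, k = m + 1 := ⟨k - 1, by omega⟩
      obtain ⟨u, huF, hune, hueq⟩ := hu m (by omega)
      rw [hueq]
      refine Subfield.mul_mem _ ?_ (Subfield.mul_mem _ ?_ ?_)
      · exact Subfield.subset_closure (Set.mem_union_left _ huF)
      · exact Subfield.subset_closure (Set.mem_union_right _ (Set.mem_union_left _
          (Set.mem_image_of_mem b (Set.mem_Icc.mpr ⟨by omega, by omega⟩))))
      · exact Subfield.subset_closure (Set.mem_union_right _ (Set.mem_union_right _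
          (Set.mem_image_of_mem a (Set.mem_Icc.mpr ⟨by omega, by omega⟩))))
  · rw [fieldAdjoin, Subfield.closure_le]
    rintro x (hx | hx | hx)
    · exact Subfield.subset_closure (Set.mem_union_left _ hx)
    · obtain ⟨j, hj, rfl⟩ := hx
      rw [Set.mem_Icc] at hj
      obtain ⟨u, huF, hune, hueq⟩ := hu j (by omega)
      have ha' : a (j+1) ≠ 0 := ha0 (j+1) (by omega)
      have hbj : b j = c (j+1) * u⁻¹ * (a (j+1))⁻¹ := by
        rw [hueq]; field_simp
      rw [hbj]
      refine Subfield.mul_mem _ (Subfield.mul_mem _ ?_ ?_) ?_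
      · exact Subfield.subset_closure (Set.mem_union_right _
          (Set.mem_image_of_mem c (Set.mem_Icc.mpr ⟨by omega, by omega⟩)))
      · exact Subfield.inv_mem _ (Subfield.subset_closure (Set.mem_union_left _ huF))
      · exact Subfield.inv_mem _ (hamem (j+1) (by omega) (by omega))
    · obtain ⟨k, hk, rfl⟩ := hx
      rw [Set.mem_Icc] at hk
      exact hamem k hk.1 hk.2
end

section
/- For every integer n ≥ 2, the element b_n belongs to the subfield of K generated by F and the elements c_1, c_2, …, c_n; that is, b_n ∈ F(c_1, …, c_n). -/
/-- Every root of `X^(q^3) - X` lies in a subfield `F` of cardinality `q^3`. -/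
lemma mem_of_pow_card_eq {K : Type*} [Field K] (q : ℕ) (hq : 2 ≤ q)
    (F : Subfield K) (hFfin : Finite F) (hFcard : Nat.card F = q ^ 3)
    (x : K) (hx : x ^ q ^ 3 = x) : x ∈ F := by
  classical
  haveI : Fintype F := Fintype.ofFinite F
  have hcard : Fintype.card F = q ^ 3 := by
    rw [← Nat.card_eq_fintype_card, hFcard]
  set P : Polynomial K := Polynomial.X ^ (q ^ 3) - Polynomial.X with hP
  have hq3 : 1 < q ^ 3 := by
    calc 1 < 2 ^ 3 := by norm_num
    _ ≤ q ^ 3 := Nat.pow_le_pow_left hq 3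
  have hdeg : P.natDegree = q ^ 3 := by
    rw [hP]
    rw [Polynomial.natDegree_sub_eq_left_of_natDegree_lt] <;>
      simp [Polynomial.natDegree_X_pow, hq3]
  have hP0 : P ≠ 0 := by
    intro h
    rw [h, Polynomial.natDegree_zero] at hdeg
    omega
  -- the finset of elements of F
  have hFsetfin : (F : Set K).Finite := Set.toFinite _
  set T : Finset K := hFsetfin.toFinset with hT
  have hTcard : T.card = q ^ 3 := by
    rw [hT, ← Nat.card_eq_card_finite_toFinset hFsetfin]
    simpa using hFcard
  have hsub : T ⊆ P.roots.toFinset := by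
    intro y hy
    rw [hT, Set.Finite.mem_toFinset] at hy
    rw [Multiset.mem_toFinset, Polynomial.mem_roots hP0]
    have hyF : (⟨y, hy⟩ : F) ^ q ^ 3 = ⟨y, hy⟩ := by
      rw [← hcard]; exact FiniteField.pow_card _
    have : y ^ q ^ 3 = y := by
      have := congrArg (Subtype.val) hyF
      push_cast at this
      exact this
    simp [hP, Polynomial.IsRoot, this]
  have hroots : P.roots.toFinset.card ≤ q ^ 3 := by
    calc P.roots.toFinset.card ≤ Multiset.card P.roots := Multiset.toFinset_card_le _
    _ ≤ P.natDegree := Polynomial.card_roots' P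
    _ = q ^ 3 := hdeg
  have hTeq : T = P.roots.toFinset :=
    Finset.eq_of_subset_of_card_le hsub (by omega)
  have hxroot : x ∈ P.roots.toFinset := by
    rw [Multiset.mem_toFinset, Polynomial.mem_roots hP0]
    simp [hP, Polynomial.IsRoot, hx]
  rw [← hTeq, hT, Set.Finite.mem_toFinset] at hxroot
  exact hxroot

theorem stmt_10
    (p : ℕ) (hp : p.Prime) (e : ℕ) (he : 0 < e) (q : ℕ) (hq : q = p ^ e)
    {K : Type*} [Field K] [CharP K p]
    (a b c : ℕ → K)
    (ha0 : ∀ n, 1 ≤ n → a n ≠ 0)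
    (ha1 : ∀ n, 1 ≤ n → a n ≠ 1)
    (ha2 : ∀ n, 1 ≤ n → a n ^ q + a n - 1 ≠ 0)
    (hR1 : ∀ n, 1 ≤ n → (1 - a (n + 1)) * a n = a (n + 1) ^ q * (a n ^ q + a n - 1))
    (hR2 : ∀ n, 1 ≤ n → c n ^ (q - 1) * a n = a n - 1)
    (hR3 : ∀ n, 1 ≤ n → b n ^ (q - 1) * a n = -(a n ^ q + a n - 1))
    (hb0 : ∀ n, 1 ≤ n → b n ≠ 0)
    (hc0 : ∀ n, 1 ≤ n → c n ≠ 0)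
    (F : Subfield K) (hFfin : Finite F) (hFcard : Nat.card F = q ^ 3)
    : ∀ n, 2 ≤ n →
      b n ∈ fieldAdjoin F (c '' Set.Icc 1 n) := by
  haveI : Fact p.Prime := ⟨hp⟩
  have hq2 : 2 ≤ q := by
    rw [hq]
    exact le_trans hp.two_le (Nat.le_self_pow (by omega) p)
  intro n hn
  set m := n - 1 with hm
  have hm1 : 1 ≤ m := by omega
  have hn1 : 1 ≤ n := by omega
  have hmn : m + 1 = n := by omega
  have hA0 : a n ≠ 0 := ha0 n hn1
  have hB0 : a m ≠ 0 := ha0 m hm1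
  have hC0 : c m ≠ 0 := hc0 m hm1
  have hbn0 : b n ≠ 0 := hb0 n hn1
  have hq0 : q ≠ 0 := by omega
  -- char p power facts for q
  have hsubq : ∀ x y : K, (x - y) ^ q = x ^ q - y ^ q := by
    intro x y; rw [hq]; exact sub_pow_char_pow x y e
  have hneg : ∀ x : K, (-x) ^ q = -(x ^ q) := fun x => by
    simpa [zero_pow hq0] using hsubq 0 x
  have hAq : a n ^ q = a n ^ (q - 1) * a n := by
    rw [← pow_succ]; congr 1; omega
  have hBq : a m ^ q = a m ^ (q - 1) * a m := by
    rw [← pow_succ]; congr 1; omega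
  have hR1' := hR1 m hm1
  rw [hmn] at hR1'
  have hR3m := hR3 m hm1
  have hR3n := hR3 n hn1
  -- Step 1: a n - 1 = a n ^ q * (b m)^(q-1)
  have h1 : a n - 1 = a n ^ q * b m ^ (q - 1) :=
    mul_right_cancel₀ hB0 (by linear_combination - hR1' - a n ^ q * hR3m)
  -- Step 2: a m * (1 + b m ^(q-1)) = -((c m ^(q-1))^q * a m ^ q)
  have h2' : (1 : K) - a m = -(c m ^ (q - 1) * a m) := by
    linear_combination hR2 m hm1
  have h3 : a m * (1 + b m ^ (q - 1)) = -((c m ^ (q - 1)) ^ q * a m ^ q) := by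
    calc a m * (1 + b m ^ (q - 1)) = 1 - a m ^ q := by linear_combination hR3m
    _ = (1 - a m) ^ q := by rw [hsubq 1 (a m), one_pow]
    _ = (-(c m ^ (q - 1) * a m)) ^ q := by rw [h2']
    _ = -((c m ^ (q - 1)) ^ q * a m ^ q) := by rw [hneg, mul_pow]
  -- expand the product power
  have hWpow : (a n * a m * c m ^ q) ^ (q - 1)
      = a n ^ (q - 1) * a m ^ (q - 1) * (c m ^ (q - 1)) ^ q := by
    rw [mul_pow, mul_pow, ← pow_mul, ← pow_mul, Nat.mul_comm q (q - 1)]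
  have e1 : b n ^ (q - 1) * a n = -(a n ^ (q - 1) * a n + a n - 1) := by
    rw [← hAq]; exact hR3n
  have h1' : a n - 1 = a n ^ (q - 1) * a n * b m ^ (q - 1) := by
    rw [← hAq]; exact h1
  have h3' : a m * (1 + b m ^ (q - 1))
      = -((c m ^ (q - 1)) ^ q * (a m ^ (q - 1) * a m)) := by
    rw [← hBq]; exact h3
  -- Step 3: b n ^(q-1) = (a n * a m * c m ^ q)^(q-1)
  have hstep3 : b n ^ (q - 1) * a n * a m
      = (a n * a m * c m ^ q) ^ (q - 1) * a n * a m := by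
    linear_combination a m * e1 - (a n ^ (q - 1) * a n) * h3' - a m * h1'
      - (a n * a m) * hWpow
  have hkey : b n ^ (q - 1) = (a n * a m * c m ^ q) ^ (q - 1) :=
    mul_right_cancel₀ hA0 (mul_right_cancel₀ hB0 hstep3)
  -- Step 4: z := b n / (a n * a m * c m^q) is a (q-1)-th root of unity, so lies in F
  set W := a n * a m * c m ^ q with hW
  have hW0 : W ≠ 0 :=
    mul_ne_zero (mul_ne_zero hA0 hB0) (pow_ne_zero _ hC0)
  set z := b n * W⁻¹ with hz
  have hz1 : z ^ (q - 1) = 1 := by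
    rw [hz, mul_pow, hkey, inv_pow, mul_inv_cancel₀ (pow_ne_zero _ hW0)]
  have hzq3 : z ^ q ^ 3 = z := by
    have hexp : q ^ 3 = (q - 1) * (q ^ 2 + q + 1) + 1 := by
      obtain ⟨k, rfl⟩ : ∃ k, q = k + 1 := ⟨q - 1, by omega⟩
      simp only [Nat.add_sub_cancel]
      ring
    rw [hexp, pow_add, pow_mul, hz1, one_pow, pow_one, one_mul]
  have hzF : z ∈ F := mem_of_pow_card_eq q hq2 F hFfin hFcard z hzq3
  -- Step 5: membership
  have hbn : b n = z * W := by
    rw [hz, mul_assoc, inv_mul_cancel₀ hW0, mul_one]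
  rw [hbn]
  have hFsub : (F : Set K) ⊆ (fieldAdjoin F (c '' Set.Icc 1 n) : Set K) :=
    fun x hx => Subfield.subset_closure (Or.inl hx)
  have hc_mem : ∀ i, 1 ≤ i → i ≤ n → c i ∈ fieldAdjoin F (c '' Set.Icc 1 n) := by
    intro i h1 h2
    exact Subfield.subset_closure (Or.inr ⟨i, ⟨h1, h2⟩, rfl⟩)
  have ha_mem : ∀ i, 1 ≤ i → i ≤ n → a i ∈ fieldAdjoin F (c '' Set.Icc 1 n) := by
    intro i h1 h2
    have h' : a i = (1 - c i ^ (q - 1))⁻¹ :=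
      eq_inv_of_mul_eq_one_left (by linear_combination - hR2 i h1)
    rw [h']
    exact Subfield.inv_mem _ (Subfield.sub_mem _ (Subfield.one_mem _)
      (Subfield.pow_mem _ (hc_mem i h1 h2) _))
  exact Subfield.mul_mem _ (hFsub hzF) (Subfield.mul_mem _
    (Subfield.mul_mem _ (ha_mem n hn1 le_rfl) (ha_mem m hm1 (by omega)))
    (Subfield.pow_mem _ (hc_mem m hm1 (by omega)) _))
end

section
/- For every integer n ≥ 2, the subfield of K generated by F and the elements a_1, a_2, …, a_n, c_1, c_2 equals the subfield of K generated by F and the elements c_1, c_2, …, c_n. (In tower notation, the compositum A_n·C_2 equals C_n.) -/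
lemma aux_mem_of_pow {K : Type*} [Field K] (F : Subfield K) (hF : Finite F)
    (m : ℕ) (hm : 1 < m) (hcard : Nat.card F = m) (x : K) (hx : x ^ m = x) : x ∈ F := by
  classical
  haveI : Fintype F := Fintype.ofFinite F
  have hcard' : Fintype.card F = m := by rw [← Nat.card_eq_fintype_card, hcard]
  by_contra hxF
  set P : Polynomial K := Polynomial.X ^ m - Polynomial.X with hP
  have hPdeg : P.natDegree = m := by
    have h1 : P = Polynomial.X ^ m + (-Polynomial.X) := by rw [hP]; ring
    rw [h1, Polynomial.natDegree_add_eq_left_of_natDegree_lt]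
    · simp
    · simpa using hm
  have hP0 : P ≠ 0 := by
    intro h; rw [h] at hPdeg; simp at hPdeg; omega
  have hroot : ∀ z : K, z ^ m = z → z ∈ P.roots.toFinset := by
    intro z hz
    rw [Multiset.mem_toFinset, Polynomial.mem_roots hP0]
    simp [hP, Polynomial.IsRoot, hz]
  set s : Finset K := Finset.univ.image (fun y : F => (y : K)) with hs
  have hscard : s.card = m := by
    rw [hs, Finset.card_image_of_injective _ Subtype.coe_injective, Finset.card_univ, hcard']
  have hxs : x ∉ s := by
    intro h
    rw [hs, Finset.mem_image] at h
    obtain ⟨y, _, rfl⟩ := h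
    exact hxF y.2
  have hsub : insert x s ⊆ P.roots.toFinset := by
    intro z hz
    rcases Finset.mem_insert.1 hz with rfl | hzs
    · exact hroot z hx
    · rw [hs, Finset.mem_image] at hzs
      obtain ⟨y, _, rfl⟩ := hzs
      apply hroot
      have := FiniteField.pow_card y
      rw [hcard'] at this
      exact_mod_cast congrArg (Subtype.val) this
  have h1 : (insert x s).card = m + 1 := by rw [Finset.card_insert_of_notMem hxs, hscard]
  have h2 : (insert x s).card ≤ P.roots.toFinset.card := Finset.card_le_card hsub
  have h3 : P.roots.toFinset.card ≤ Multiset.card P.roots := Multiset.toFinset_card_le _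
  have h4 := P.card_roots'
  omega

lemma aux_key {K : Type*} [Field K] {p e q r : ℕ} [CharP K p] (hp : p.Prime)
    (hq : q = p ^ e) (hqr : q = r + 1)
    (A0 A1 A2 C0 C2 : K) (hA0 : A0 ≠ 0) (hA1 : A1 ≠ 0) (hA2 : A2 ≠ 0) (hC0 : C0 ≠ 0)
    (h2 : C0 ^ r * A0 = A0 - 1)
    (hii : (1 - A1) * A0 = A1 ^ q * (A0 ^ q + A0 - 1))
    (hiii : (1 - A2) * A1 = A2 ^ q * (A1 ^ q + A1 - 1))
    (hiv : C2 ^ r * A2 = A2 - 1) :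
    C2 ^ r = (A2 * A1 * A0 * C0 ^ q) ^ r := by
  haveI : Fact p.Prime := ⟨hp⟩
  have frob : (A0 - 1) ^ q = A0 ^ q - 1 := by
    rw [hq, sub_pow_char_pow, one_pow]
  have hF : (C0 ^ r * A0) ^ q = A0 ^ q - 1 := by rw [h2, frob]
  have E1 : (A1 ^ q + A1 - 1) * A0 = A1 ^ q * (1 - A0 ^ q) := by linear_combination -hii
  have E2 : (A1 ^ q + A1 - 1) * A0 = -(A1 ^ q * (C0 ^ r * A0) ^ q) := by
    rw [E1, hF]; ring
  have main : C2 ^ r * A2 * A1 * A0 = A2 ^ q * A1 ^ q * (C0 ^ r * A0) ^ q := by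
    linear_combination (A1 * A0) * hiv - A0 * hiii - A2 ^ q * E2
  subst hqr
  have hd : A2 * A1 * A0 * C0 ^ (r + 1) ≠ 0 := by
    apply mul_ne_zero (mul_ne_zero (mul_ne_zero hA2 hA1) hA0) (pow_ne_zero _ hC0)
  apply mul_right_cancel₀ hd
  calc C2 ^ r * (A2 * A1 * A0 * C0 ^ (r + 1))
      = (C2 ^ r * A2 * A1 * A0) * C0 ^ (r + 1) := by ring
    _ = (A2 ^ (r+1) * A1 ^ (r+1) * (C0 ^ r * A0) ^ (r+1)) * C0 ^ (r + 1) := by rw [main]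
    _ = (A2 * A1 * A0 * C0 ^ (r + 1)) ^ r * (A2 * A1 * A0 * C0 ^ (r + 1)) := by ring

theorem stmt_11
    (p : ℕ) (hp : p.Prime) (e : ℕ) (he : 0 < e) (q : ℕ) (hq : q = p ^ e)
    {K : Type*} [Field K] [CharP K p]
    (a b c : ℕ → K)
    (ha0 : ∀ n, 1 ≤ n → a n ≠ 0)
    (ha1 : ∀ n, 1 ≤ n → a n ≠ 1)
    (ha2 : ∀ n, 1 ≤ n → a n ^ q + a n - 1 ≠ 0)
    (hR1 : ∀ n, 1 ≤ n → (1 - a (n + 1)) * a n = a (n + 1) ^ q * (a n ^ q + a n - 1))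
    (hR2 : ∀ n, 1 ≤ n → c n ^ (q - 1) * a n = a n - 1)
    (hR3 : ∀ n, 1 ≤ n → b n ^ (q - 1) * a n = -(a n ^ q + a n - 1))
    (hb0 : ∀ n, 1 ≤ n → b n ≠ 0)
    (hc0 : ∀ n, 1 ≤ n → c n ≠ 0)
    (F : Subfield K) (hFfin : Finite F) (hFcard : Nat.card F = q ^ 3)
    : ∀ n, 2 ≤ n →
      fieldAdjoin F (a '' Set.Icc 1 n ∪ {c 1, c 2}) = fieldAdjoin F (c '' Set.Icc 1 n) := by
  have hq2 : 2 ≤ q := by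
    rw [hq]; exact Nat.one_lt_pow (by omega) hp.one_lt
  set r := q - 1 with hr
  have hqr : q = r + 1 := by omega
  -- a k is a rational function of c k
  have ha_of_c : ∀ k, 1 ≤ k → a k = (1 - c k ^ r)⁻¹ := by
    intro k hk
    have h1 : (1 - c k ^ r) * a k = 1 := by linear_combination -(hR2 k hk)
    exact eq_inv_of_mul_eq_one_left (by linear_combination h1)
  -- key: c (m+2) = ζ * (a (m+2) * a (m+1) * a m * c m ^ q) with ζ ∈ F
  have hkey : ∀ m, 1 ≤ m → ∃ ζ, ζ ∈ F ∧
      c (m + 2) = ζ * (a (m + 2) * a (m + 1) * a m * c m ^ q) := by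
    intro m hm
    set d : K := a (m + 2) * a (m + 1) * a m * c m ^ q with hd
    have hdne : d ≠ 0 := by
      apply mul_ne_zero (mul_ne_zero (mul_ne_zero (ha0 _ (by omega)) (ha0 _ (by omega)))
        (ha0 _ hm)) (pow_ne_zero _ (hc0 _ hm))
    have hpow : c (m + 2) ^ r = d ^ r := by
      rw [hd]
      exact aux_key hp hq hqr (a m) (a (m+1)) (a (m+2)) (c m) (c (m+2))
        (ha0 _ hm) (ha0 _ (by omega)) (ha0 _ (by omega)) (hc0 _ hm)
        (hR2 m hm) (hR1 m hm) (hR1 (m+1) (by omega)) (hR2 (m+2) (by omega))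
    refine ⟨c (m + 2) * d⁻¹, ?_, by field_simp⟩
    have hζr : (c (m + 2) * d⁻¹) ^ r = 1 := by
      rw [mul_pow, hpow, inv_pow, mul_inv_cancel₀ (pow_ne_zero _ hdne)]
    apply aux_mem_of_pow F hFfin (q ^ 3) (Nat.one_lt_pow (by omega) (by omega)) hFcard
    have hq3 : q ^ 3 = r * (q ^ 2 + q + 1) + 1 := by
      rw [hqr]; ring
    rw [hq3, pow_add, pow_mul, hζr]; simp
  intro n hn
  set G := fieldAdjoin F (a '' Set.Icc 1 n ∪ {c 1, c 2}) with hG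
  set H := fieldAdjoin F (c '' Set.Icc 1 n) with hH
  have hFG : ∀ x, x ∈ F → x ∈ G := fun x hx => Subfield.subset_closure (Or.inl hx)
  have haG : ∀ i, 1 ≤ i → i ≤ n → a i ∈ G := fun i h1 h2 =>
    Subfield.subset_closure (Or.inr (Or.inl ⟨i, Set.mem_Icc.2 ⟨h1, h2⟩, rfl⟩))
  have hc1G : c 1 ∈ G := Subfield.subset_closure (Or.inr (Or.inr (Set.mem_insert _ _)))
  have hc2G : c 2 ∈ G := Subfield.subset_closure (Or.inr (Or.inr (Set.mem_insert_of_mem _ rfl)))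
  have hFH : ∀ x, x ∈ F → x ∈ H := fun x hx => Subfield.subset_closure (Or.inl hx)
  have hcH : ∀ i, 1 ≤ i → i ≤ n → c i ∈ H := fun i h1 h2 =>
    Subfield.subset_closure (Or.inr ⟨i, Set.mem_Icc.2 ⟨h1, h2⟩, rfl⟩)
  have hcG : ∀ k, 1 ≤ k → k ≤ n → c k ∈ G := by
    intro k
    induction k using Nat.strong_induction_on with
    | _ k ih =>
      intro hk1 hkn
      rcases k with _ | _ | _ | m
      · omega
      · exact hc1G
      · exact hc2G
      · obtain ⟨ζ, hζF, hceq⟩ := hkey (m + 1) (by omega)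
        have : c (m + 3) = ζ * (a (m + 3) * a (m + 2) * a (m + 1) * c (m + 1) ^ q) := hceq
        rw [this]
        exact G.mul_mem (hFG ζ hζF)
          (G.mul_mem (G.mul_mem (G.mul_mem (haG _ (by omega) (by omega))
            (haG _ (by omega) (by omega))) (haG _ (by omega) (by omega)))
            (G.pow_mem (ih (m + 1) (by omega) (by omega) (by omega)) q))
  apply le_antisymm
  · rw [hG, fieldAdjoin]
    apply Subfield.closure_le.mpr
    rintro x (hx | (⟨i, hi, rfl⟩ | hx))
    · exact hFH x hx
    · rw [Set.mem_Icc] at hi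
      rw [ha_of_c i hi.1]
      exact H.inv_mem (H.sub_mem H.one_mem (H.pow_mem (hcH i hi.1 hi.2) r))
    · rcases hx with rfl | hx
      · exact hcH 1 (by omega) (by omega)
      · rw [Set.mem_singleton_iff] at hx; rw [hx]
        exact hcH 2 (by omega) hn
  · rw [hH, fieldAdjoin]
    apply Subfield.closure_le.mpr
    rintro x (hx | ⟨i, hi, rfl⟩)
    · exact hFG x hx
    · rw [Set.mem_Icc] at hi
      exact hcG i hi.1 hi.2
end

section
/- For every integer n ≥ 2, the subfield of K generated by F and the elements a_1, a_2, …, a_n, b_1, b_2 equals the subfield of K generated by F and the elements a_1, b_1, a_2, b_2, …, a_n, b_n. (In tower notation, the compositum A_n·H_2 equals H_n.) -/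
open Polynomial in
lemma aux_mem_of_pow_eq_self {K : Type*} [Field K] (F : Subfield K) [Finite F]
    (N : ℕ) (hN : 2 ≤ N) (hcard : Nat.card F = N) {x : K} (hx : x ^ N = x) :
    x ∈ F := by
  classical
  have : Fintype F := Fintype.ofFinite F
  set P : K[X] := X ^ N - X with hP
  have hPne : P ≠ 0 := FiniteField.X_pow_card_sub_X_ne_zero K (by omega)
  have hdeg : P.natDegree = N := FiniteField.X_pow_card_sub_X_natDegree_eq K (by omega)
  have hroots : P.roots.toFinset.card ≤ N :=
    le_trans (Multiset.toFinset_card_le _)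
      (le_trans (Polynomial.card_roots' P) (le_of_eq hdeg))
  have hFfin : (F : Set K).Finite := Set.toFinite _
  let G : Finset K := hFfin.toFinset
  have hGcard : G.card = N := by
    rw [Set.Finite.card_toFinset, ← Nat.card_eq_fintype_card]
    simpa using hcard
  have hGsub : G ⊆ P.roots.toFinset := by
    intro y hy
    have hyF : y ∈ F := by simpa [G] using hy
    have hyN : y ^ N = y := by
      have := FiniteField.pow_card (⟨y, hyF⟩ : F)
      rw [Fintype.card_eq_nat_card, hcard] at this
      have h2 := congrArg (Subtype.val) this
      push_cast at h2
      exact_mod_cast h2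
    rw [Multiset.mem_toFinset, Polynomial.mem_roots hPne]
    simp [hP, Polynomial.IsRoot, sub_eq_zero, hyN]
  have hGeq : G = P.roots.toFinset :=
    Finset.eq_of_subset_of_card_le hGsub (by omega)
  have hxroot : x ∈ P.roots.toFinset := by
    rw [Multiset.mem_toFinset, Polynomial.mem_roots hPne]
    simp [hP, Polynomial.IsRoot, sub_eq_zero, hx]
  rw [← hGeq] at hxroot
  simpa [G] using hxroot

lemma aux_key_alg {K : Type*} [Field K] (p : ℕ) [CharP K p] {e q : ℕ}
    (hq : q = p ^ e) (he : 0 < e) (hp : p.Prime)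
    (A0 A1 A2 B0 B2 : K)
    (hA0 : A0 ≠ 0) (hA1 : A1 ≠ 0) (hA2 : A2 ≠ 0)
    (h1 : (1 - A1) * A0 = A1 ^ q * (A0 ^ q + A0 - 1))
    (h2 : (1 - A2) * A1 = A2 ^ q * (A1 ^ q + A1 - 1))
    (h3 : B0 ^ (q - 1) * A0 = -(A0 ^ q + A0 - 1))
    (h4 : B2 ^ (q - 1) * A2 = -(A2 ^ q + A2 - 1)) :
    B2 ^ (q - 1) = (A2 * (1 - A1) * A1 * B0) ^ (q - 1) := by
  have hq2 : 2 ≤ q := by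
    rw [hq]
    calc 2 ≤ p := hp.two_le
    _ = p ^ 1 := (pow_one p).symm
    _ ≤ p ^ e := Nat.pow_le_pow_right hp.pos he
  have hfrob : (1 - A1) ^ q = 1 - A1 ^ q := by
    have : Fact p.Prime := ⟨hp⟩
    subst hq
    simpa using sub_pow_char_pow (1 : K) A1 (n := e) (p := p)
  have e1 : (A2 ^ q + A2 - 1) * A1 = A2 ^ q * (1 - A1) ^ q := by
    rw [hfrob]; linear_combination -h2
  have e2 : B0 ^ (q - 1) * A1 ^ q = A1 - 1 := by
    apply mul_right_cancel₀ hA0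
    linear_combination A1 ^ q * h3 + h1
  obtain ⟨Q, rfl⟩ : ∃ Q, q = Q + 1 := ⟨q - 1, by omega⟩
  simp only [Nat.add_sub_cancel] at h3 h4 e2 ⊢
  rw [mul_pow, mul_pow, mul_pow]
  apply mul_right_cancel₀ (mul_ne_zero hA2 hA1)
  linear_combination A1 * h4 - e1 - A2 ^ (Q + 1) * (1 - A1) ^ Q * e2

theorem stmt_12
    (p : ℕ) (hp : p.Prime) (e : ℕ) (he : 0 < e) (q : ℕ) (hq : q = p ^ e)
    {K : Type*} [Field K] [CharP K p]
    (a b c : ℕ → K)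
    (ha0 : ∀ n, 1 ≤ n → a n ≠ 0)
    (ha1 : ∀ n, 1 ≤ n → a n ≠ 1)
    (ha2 : ∀ n, 1 ≤ n → a n ^ q + a n - 1 ≠ 0)
    (hR1 : ∀ n, 1 ≤ n → (1 - a (n + 1)) * a n = a (n + 1) ^ q * (a n ^ q + a n - 1))
    (hR2 : ∀ n, 1 ≤ n → c n ^ (q - 1) * a n = a n - 1)
    (hR3 : ∀ n, 1 ≤ n → b n ^ (q - 1) * a n = -(a n ^ q + a n - 1))
    (hb0 : ∀ n, 1 ≤ n → b n ≠ 0)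
    (hc0 : ∀ n, 1 ≤ n → c n ≠ 0)
    (F : Subfield K) (hFfin : Finite F) (hFcard : Nat.card F = q ^ 3)
    : ∀ n, 2 ≤ n →
      fieldAdjoin F (a '' Set.Icc 1 n ∪ {b 1, b 2})
        = fieldAdjoin F (a '' Set.Icc 1 n ∪ b '' Set.Icc 1 n) := by
  intro n hn
  have hq2 : 2 ≤ q := by
    rw [hq]
    calc 2 ≤ p := hp.two_le
    _ = p ^ 1 := (pow_one p).symm
    _ ≤ p ^ e := Nat.pow_le_pow_right hp.pos he
  set E : Subfield K := fieldAdjoin F (a '' Set.Icc 1 n ∪ {b 1, b 2}) with hE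
  have hFE : ∀ x : K, x ∈ F → x ∈ E := fun x hx =>
    Subfield.subset_closure (Or.inl hx)
  have haE : ∀ i, 1 ≤ i → i ≤ n → a i ∈ E := fun i h1 h2 =>
    Subfield.subset_closure (Or.inr (Or.inl ⟨i, Set.mem_Icc.mpr ⟨h1, h2⟩, rfl⟩))
  have key : ∀ k, 1 ≤ k → k ≤ n → b k ∈ E := by
    intro k
    induction k using Nat.strong_induction_on with
    | _ k ih =>
      intro hk1 hkn
      match k, hk1, hkn, ih with
      | 1, _, _, _ =>
        exact Subfield.subset_closure (Or.inr (Or.inr (Or.inl rfl)))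
      | 2, _, _, _ =>
        exact Subfield.subset_closure (Or.inr (Or.inr (Or.inr rfl)))
      | (j+3), _, hkn, ih =>
        have hj1 : (1:ℕ) ≤ j + 1 := by omega
        have hj2 : (1:ℕ) ≤ j + 2 := by omega
        have hj3 : (1:ℕ) ≤ j + 3 := by omega
        have hA1ne : (1 : K) - a (j+2) ≠ 0 :=
          sub_ne_zero.mpr (Ne.symm (ha1 (j+2) hj2))
        have keyeq : b (j+3) ^ (q-1)
            = (a (j+3) * (1 - a (j+2)) * a (j+2) * b (j+1)) ^ (q-1) :=
          aux_key_alg p hq he hp (a (j+1)) (a (j+2)) (a (j+3)) (b (j+1)) (b (j+3))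
            (ha0 _ hj1) (ha0 _ hj2) (ha0 _ hj3)
            (hR1 (j+1) hj1) (hR1 (j+2) hj2) (hR3 (j+1) hj1) (hR3 (j+3) hj3)
        set d : K := a (j+3) * (1 - a (j+2)) * a (j+2) * b (j+1) with hd
        have hdne : d ≠ 0 :=
          mul_ne_zero (mul_ne_zero (mul_ne_zero (ha0 _ hj3) hA1ne) (ha0 _ hj2))
            (hb0 _ hj1)
        set z : K := b (j+3) * d⁻¹ with hz
        have hzpow : z ^ (q - 1) = 1 := by
          rw [hz, mul_pow, keyeq, inv_pow, mul_inv_cancel₀ (pow_ne_zero _ hdne)]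
        have hzq3 : z ^ (q ^ 3) = z := by
          have hexp : q ^ 3 = (q - 1) * (q ^ 2 + q + 1) + 1 := by
            obtain ⟨r, rfl⟩ : ∃ r, q = r + 1 := ⟨q - 1, by omega⟩
            simp only [Nat.add_sub_cancel]
            ring
          rw [hexp, pow_succ, pow_mul, hzpow, one_pow, one_mul]
        have hzF : z ∈ F :=
          aux_mem_of_pow_eq_self F (q ^ 3) (le_trans hq2 (Nat.le_self_pow (by omega) q)) hFcard hzq3
        have hbzd : b (j+3) = z * d := by
          rw [hz, mul_assoc, inv_mul_cancel₀ hdne, mul_one]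
        rw [hbzd, hd]
        exact mul_mem (hFE z hzF)
          (mul_mem (mul_mem (mul_mem (haE _ hj3 hkn) (sub_mem (one_mem E) (haE _ hj2 (by omega))))
            (haE _ hj2 (by omega)))
            (ih (j+1) (by omega) hj1 (by omega)))
  apply le_antisymm
  · apply Subfield.closure_mono
    apply Set.union_subset_union_right
    apply Set.union_subset_union_right
    intro x hx
    rcases hx with rfl | rfl
    · exact ⟨1, Set.mem_Icc.mpr ⟨le_refl 1, by omega⟩, rfl⟩
    · exact ⟨2, Set.mem_Icc.mpr ⟨by omega, hn⟩, rfl⟩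
  · apply Subfield.closure_le.mpr
    rintro x (hx | hx | ⟨k, hk, rfl⟩)
    · exact hFE x hx
    · obtain ⟨i, hi, rfl⟩ := hx
      exact haE i (Set.mem_Icc.mp hi).1 (Set.mem_Icc.mp hi).2
    · exact key k (Set.mem_Icc.mp hk).1 (Set.mem_Icc.mp hk).2
end

section
/- For every integer n ≥ 3, the element b_n belongs to the subfield of K generated by F and the elements a_1, b_1, a_2, b_2, …, a_{n−1}, b_{n−1}, a_n; consequently F(a_1, b_1, …, a_{n−1}, b_{n−1}, a_n, b_n) = F(a_1, b_1, …, a_{n−1}, b_{n−1}, a_n). (In tower notation, H_n = G_n for n ≥ 3.) -/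
theorem stmt_13
    (p : ℕ) (hp : p.Prime) (e : ℕ) (he : 0 < e) (q : ℕ) (hq : q = p ^ e)
    {K : Type*} [Field K] [CharP K p]
    (a b c : ℕ → K)
    (ha0 : ∀ n, 1 ≤ n → a n ≠ 0)
    (ha1 : ∀ n, 1 ≤ n → a n ≠ 1)
    (ha2 : ∀ n, 1 ≤ n → a n ^ q + a n - 1 ≠ 0)
    (hR1 : ∀ n, 1 ≤ n → (1 - a (n + 1)) * a n = a (n + 1) ^ q * (a n ^ q + a n - 1))
    (hR2 : ∀ n, 1 ≤ n → c n ^ (q - 1) * a n = a n - 1)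
    (hR3 : ∀ n, 1 ≤ n → b n ^ (q - 1) * a n = -(a n ^ q + a n - 1))
    (hb0 : ∀ n, 1 ≤ n → b n ≠ 0)
    (hc0 : ∀ n, 1 ≤ n → c n ≠ 0)
    (F : Subfield K) (hFfin : Finite F) (hFcard : Nat.card F = q ^ 3)
    : ∀ n, 3 ≤ n →
      b n ∈ fieldAdjoin F (a '' Set.Icc 1 n ∪ b '' Set.Icc 1 (n - 1)) ∧
      fieldAdjoin F (a '' Set.Icc 1 n ∪ b '' Set.Icc 1 n)
        = fieldAdjoin F (a '' Set.Icc 1 n ∪ b '' Set.Icc 1 (n - 1)) := by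
  classical
  haveI : Fact p.Prime := ⟨hp⟩
  intro n hn
  have hq2 : 2 ≤ q := by
    rw [hq]; exact Nat.one_lt_pow (by omega) hp.one_lt
  obtain ⟨r, hr⟩ : ∃ r, q = r + 1 := ⟨q - 1, by omega⟩
  have hr1 : q - 1 = r := by omega
  -- nonvanishing
  have hA0 : a n ≠ 0 := ha0 n (by omega)
  have hM0 : a (n-1) ≠ 0 := ha0 _ (by omega)
  have hM1 : a (n-1) - 1 ≠ 0 := sub_ne_zero.mpr (ha1 _ (by omega))
  have hBk0 : b (n-2) ≠ 0 := hb0 _ (by omega)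
  have hak0 : a (n-2) ≠ 0 := ha0 _ (by omega)
  -- relations at the needed indices
  have hR3n := hR3 n (by omega)
  have hR1m := hR1 (n-1) (by omega)
  rw [show n-1+1 = n from by omega] at hR1m
  have hR1k := hR1 (n-2) (by omega)
  rw [show n-2+1 = n-1 from by omega] at hR1k
  have hR3k := hR3 (n-2) (by omega)
  rw [hr1] at hR3n hR3k
  rw [hr] at hR3n hR3k hR1m hR1k
  -- E1 : b_{n-2}^r * a_{n-1}^q = a_{n-1} - 1
  have hE1 : b (n-2) ^ r * (a (n-1)) ^ (r+1) = a (n-1) - 1 := by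
    apply mul_right_cancel₀ hak0
    linear_combination (a (n-1)) ^ (r+1) * hR3k + hR1k
  -- Frobenius
  have frob : (a (n-1) - 1) ^ (r+1) = (a (n-1)) ^ (r+1) - 1 := by
    have h := sub_pow_char_pow (a (n-1)) 1 e (p := p)
    rw [one_pow, ← hq, hr] at h
    exact h
  -- the key identity
  have key : b n ^ r = (a n * (a (n-1) * ((a (n-1) - 1) * b (n-2)))) ^ r := by
    apply mul_right_cancel₀
      (show a n * (a (n-1)) ^ (r+1) ≠ 0 from mul_ne_zero hA0 (pow_ne_zero _ hM0))
    rw [mul_pow, mul_pow, mul_pow]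
    linear_combination (a (n-1)) ^ (r+1) * hR3n + (a (n-1)) ^ r * hR1m
      - (a n) ^ (r+1) * (a (n-1)) ^ r * ((a (n-1) - 1)) ^ r * hE1
      - (a n) ^ (r+1) * (a (n-1)) ^ r * frob
  -- the root of unity
  set T : K := a n * (a (n-1) * ((a (n-1) - 1) * b (n-2))) with hTdef
  have hT0 : T ≠ 0 := mul_ne_zero hA0 (mul_ne_zero hM0 (mul_ne_zero hM1 hBk0))
  set z : K := b n / T with hzdef
  have hzpow : z ^ r = 1 := by
    rw [hzdef, div_pow, ← key, div_self (pow_ne_zero _ (hb0 n (by omega)))]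
  have hzq : z ^ q = z := by rw [hr, pow_succ, hzpow, one_mul]
  have hzq3 : z ^ (q ^ 3) = z := by
    rw [show q^3 = q*q*q from by ring, pow_mul, pow_mul, hzq, hzq, hzq]
  -- every solution of x^(q^3) = x lies in F
  have hzF : z ∈ F := by
    by_contra hnotF
    set P : Polynomial K := Polynomial.X ^ (q^3) - Polynomial.X with hP
    have hq31 : 1 < q ^ 3 := Nat.one_lt_pow (by norm_num) (by omega)
    have hPne : P ≠ 0 := by
      intro h
      have hc1 : P.coeff (q^3) = 1 := by
        simp [hP, Polynomial.coeff_X_pow, Polynomial.coeff_X, (by exact hq31.ne : ¬ (1 = q^3))]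
      rw [h] at hc1
      simp at hc1
    have hroot : ∀ x : K, x ^ (q^3) = x → x ∈ P.roots.toFinset := by
      intro x hx
      rw [Multiset.mem_toFinset, Polynomial.mem_roots hPne]
      simp [hP, Polynomial.IsRoot, hx]
    have hdeg : P.natDegree ≤ q ^ 3 := by
      refine (Polynomial.natDegree_sub_le _ _).trans ?_
      simp only [Polynomial.natDegree_X_pow, Polynomial.natDegree_X]
      omega
    have hcard : P.roots.toFinset.card ≤ q ^ 3 :=
      le_trans (Multiset.toFinset_card_le _) (le_trans (Polynomial.card_roots' P) hdeg)
    have hFroot : ∀ x : K, x ∈ F → x ^ (q^3) = x := by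
      intro x hx
      letI : Fintype F := Fintype.ofFinite F
      have hcardF : Fintype.card F = q^3 := by rw [← Nat.card_eq_fintype_card, hFcard]
      have h := FiniteField.pow_card (⟨x, hx⟩ : F)
      rw [hcardF] at h
      have h2 := congrArg (Subtype.val) h
      push_cast at h2
      exact h2
    have hfin : (↑F : Set K).Finite := Set.finite_coe_iff.mp hFfin
    have hsub : insert z (↑F : Set K) ⊆ ↑P.roots.toFinset := by
      rintro x hx
      rcases Set.mem_insert_iff.mp hx with rfl | hx
      · exact hroot _ hzq3
      · exact hroot _ (hFroot _ hx)
    have h1 : (insert z (↑F : Set K)).ncard = q^3 + 1 := by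
      rw [Set.ncard_insert_of_notMem hnotF hfin, ← Nat.card_coe_set_eq]
      rw [show Nat.card ↑(↑F : Set K) = Nat.card F from rfl, hFcard]
    have h2 : (insert z (↑F : Set K)).ncard ≤ q^3 := by
      refine le_trans (Set.ncard_le_ncard hsub (P.roots.toFinset.finite_toSet)) ?_
      rw [Set.ncard_coe_finset]
      exact hcard
    omega
  -- membership
  have hbn : b n = z * T := by rw [hzdef, div_mul_cancel₀ _ hT0]
  have hmem : b n ∈ fieldAdjoin F (a '' Set.Icc 1 n ∪ b '' Set.Icc 1 (n - 1)) := by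
    rw [hbn]
    refine mul_mem (Subfield.subset_closure (Or.inl hzF)) ?_
    refine mul_mem (Subfield.subset_closure (Or.inr (Or.inl ⟨n, Set.mem_Icc.mpr ⟨by omega, le_refl n⟩, rfl⟩))) ?_
    refine mul_mem (Subfield.subset_closure (Or.inr (Or.inl ⟨n-1, Set.mem_Icc.mpr ⟨by omega, by omega⟩, rfl⟩))) ?_
    refine mul_mem (sub_mem (Subfield.subset_closure (Or.inr (Or.inl ⟨n-1, Set.mem_Icc.mpr ⟨by omega, by omega⟩, rfl⟩))) (one_mem _)) ?_
    exact Subfield.subset_closure (Or.inr (Or.inr ⟨n-2, Set.mem_Icc.mpr ⟨by omega, by omega⟩, rfl⟩))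
  refine ⟨hmem, le_antisymm ?_ ?_⟩
  · rw [fieldAdjoin, Subfield.closure_le]
    rintro x (hx | hx | hx)
    · exact Subfield.subset_closure (Or.inl hx)
    · exact Subfield.subset_closure (Or.inr (Or.inl hx))
    · obtain ⟨j, hj, rfl⟩ := hx
      rw [Set.mem_Icc] at hj
      rcases eq_or_lt_of_le hj.2 with rfl | hjlt
      · exact hmem
      · exact Subfield.subset_closure (Or.inr (Or.inr ⟨j, Set.mem_Icc.mpr ⟨hj.1, by omega⟩, rfl⟩))
  · apply Subfield.closure_mono
    apply Set.union_subset_union_right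
    apply Set.union_subset_union_right
    exact Set.image_mono (Set.Icc_subset_Icc_right (by omega))
end

section
/- For every integer n ≥ 2, the element c_{n+1} belongs to the subfield of K generated by F and the elements c_{n−1}, a_n, a_{n+1}; that is, c_{n+1} ∈ F(c_{n−1}, a_n, a_{n+1}). -/
/-- Key algebraic identity derived from the tower relations. -/
lemma key_eq {K : Type*} [Field K] (m : ℕ) (A B C cm cp : K)
    (hA : A ≠ 0) (hB : B ≠ 0) (hC : C ≠ 0)
    (h1 : (1 - B) * A = B ^ (m + 1) * (A ^ (m + 1) + A - 1))
    (h2 : (1 - C) * B = C ^ (m + 1) * (B ^ (m + 1) + B - 1))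
    (h3 : cm ^ m * A = A - 1)
    (h4 : cp ^ m * C = C - 1)
    (hfr : (A - 1) ^ (m + 1) = A ^ (m + 1) - 1) :
    cp ^ m = (C * B * A * cm ^ (m + 1)) ^ m := by
  have hX : C * A ^ (m + 1) * B ≠ 0 :=
    mul_ne_zero (mul_ne_zero hC (pow_ne_zero _ hA)) hB
  apply mul_right_cancel₀ hX
  have e1 : (cm ^ m) ^ (m + 1) * A ^ (m + 1) = A ^ (m + 1) - 1 := by
    rw [← mul_pow, h3, hfr]
  have e2 : (cm ^ (m + 1)) ^ m = (cm ^ m) ^ (m + 1) := pow_right_comm cm (m + 1) m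
  rw [mul_pow, mul_pow, mul_pow, e2]
  linear_combination (A ^ (m + 1) * B) * h4 + (C ^ (m + 1) * A ^ m) * h1 -
    A ^ (m + 1) * h2 - (C ^ (m + 1) * B ^ (m + 1) * A ^ m) * e1

/-- An element of `K` fixed by `x ↦ x ^ N` lies in any subfield with exactly `N` elements. -/
lemma mem_of_pow_eq_self {K : Type*} [Field K] (F : Subfield K) (hFfin : Finite F)
    (N : ℕ) (hN : 1 < N) (hcard : Nat.card F = N) (x : K) (hx : x ^ N = x) : x ∈ F := by
  classical
  haveI : Fintype F := Fintype.ofFinite F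
  have hcard' : Fintype.card F = N := by rw [← Nat.card_eq_fintype_card, hcard]
  set P : Polynomial K := Polynomial.X ^ N - Polynomial.X with hP
  have hPne : P ≠ 0 := FiniteField.X_pow_card_sub_X_ne_zero K hN
  have hdeg : P.natDegree = N := FiniteField.X_pow_card_sub_X_natDegree_eq K hN
  have hroots : P.roots.toFinset.card ≤ N := by
    calc P.roots.toFinset.card ≤ Multiset.card P.roots := P.roots.toFinset_card_le
      _ ≤ P.natDegree := P.card_roots'
      _ = N := hdeg
  set Fimg : Finset K := Finset.univ.image (fun y : F => (y : K)) with hFimg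
  have hFimgcard : Fimg.card = N := by
    rw [hFimg, Finset.card_image_of_injective _ Subtype.val_injective,
      Finset.card_univ, hcard']
  have hroot_of_F : Fimg ⊆ P.roots.toFinset := by
    intro z hz
    rw [hFimg, Finset.mem_image] at hz
    obtain ⟨y, -, rfl⟩ := hz
    have hy : y ^ N = y := by
      have := FiniteField.pow_card y
      rwa [hcard'] at this
    rw [Multiset.mem_toFinset, Polynomial.mem_roots hPne]
    simp only [Polynomial.IsRoot, hP, Polynomial.eval_sub, Polynomial.eval_pow,
      Polynomial.eval_X]
    rw [sub_eq_zero]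
    exact_mod_cast congrArg (Subtype.val) hy
  have hxroot : x ∈ P.roots.toFinset := by
    rw [Multiset.mem_toFinset, Polynomial.mem_roots hPne]
    simp only [Polynomial.IsRoot, hP, Polynomial.eval_sub, Polynomial.eval_pow,
      Polynomial.eval_X]
    rw [sub_eq_zero]; exact hx
  by_contra hxF
  have hxnot : x ∉ Fimg := by
    intro h
    rw [hFimg, Finset.mem_image] at h
    obtain ⟨y, -, rfl⟩ := h
    exact hxF y.2
  have hsub : insert x Fimg ⊆ P.roots.toFinset := by
    intro z hz
    rcases Finset.mem_insert.mp hz with rfl | hz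
    · exact hxroot
    · exact hroot_of_F hz
  have hle := Finset.card_le_card hsub
  rw [Finset.card_insert_of_notMem hxnot, hFimgcard] at hle
  omega

theorem stmt_14
    (p : ℕ) (hp : p.Prime) (e : ℕ) (he : 0 < e) (q : ℕ) (hq : q = p ^ e)
    {K : Type*} [Field K] [CharP K p]
    (a b c : ℕ → K)
    (ha0 : ∀ n, 1 ≤ n → a n ≠ 0)
    (ha1 : ∀ n, 1 ≤ n → a n ≠ 1)
    (ha2 : ∀ n, 1 ≤ n → a n ^ q + a n - 1 ≠ 0)
    (hR1 : ∀ n, 1 ≤ n → (1 - a (n + 1)) * a n = a (n + 1) ^ q * (a n ^ q + a n - 1))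
    (hR2 : ∀ n, 1 ≤ n → c n ^ (q - 1) * a n = a n - 1)
    (hR3 : ∀ n, 1 ≤ n → b n ^ (q - 1) * a n = -(a n ^ q + a n - 1))
    (hb0 : ∀ n, 1 ≤ n → b n ≠ 0)
    (hc0 : ∀ n, 1 ≤ n → c n ≠ 0)
    (F : Subfield K) (hFfin : Finite F) (hFcard : Nat.card F = q ^ 3)
    : ∀ n, 2 ≤ n →
      c (n + 1) ∈ fieldAdjoin F {c (n - 1), a n, a (n + 1)} := by
  haveI : Fact p.Prime := ⟨hp⟩
  have hq2 : 2 ≤ q := by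
    have : 1 < p ^ e := Nat.one_lt_pow (by omega) hp.one_lt
    omega
  obtain ⟨m, rfl⟩ : ∃ m, q = m + 1 := ⟨q - 1, by omega⟩
  intro n hn
  obtain ⟨k, rfl⟩ : ∃ k, n = k + 2 := ⟨n - 2, by omega⟩
  have hsub1 : k + 2 - 1 = k + 1 := rfl
  rw [hsub1]
  set L := fieldAdjoin F {c (k + 1), a (k + 2), a (k + 2 + 1)} with hL
  have hFL : ∀ x : K, x ∈ F → x ∈ L := fun x hx =>
    Subfield.subset_closure (Set.mem_union_left _ hx)
  have hcmL : c (k + 1) ∈ L :=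
    Subfield.subset_closure (Set.mem_union_right _ (by left; rfl))
  have hBL : a (k + 2) ∈ L :=
    Subfield.subset_closure (Set.mem_union_right _ (by right; left; rfl))
  have hCL : a (k + 2 + 1) ∈ L :=
    Subfield.subset_closure (Set.mem_union_right _ (by right; right; rfl))
  -- notation
  have hA0 : a (k + 1) ≠ 0 := ha0 _ (by omega)
  have hB0 : a (k + 2) ≠ 0 := ha0 _ (by omega)
  have hC0 : a (k + 3) ≠ 0 := ha0 _ (by omega)
  have hcm0 : c (k + 1) ≠ 0 := hc0 _ (by omega)
  have h1 := hR1 (k + 1) (by omega)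
  have h2 := hR1 (k + 2) (by omega)
  have h3 := hR2 (k + 1) (by omega)
  have h4 := hR2 (k + 3) (by omega)
  simp only [Nat.add_sub_cancel] at h3 h4
  have hfr : (a (k + 1) - 1) ^ (m + 1) = a (k + 1) ^ (m + 1) - 1 := by
    have := sub_pow_char_pow (R := K) (p := p) (n := e) (x := a (k + 1)) (y := 1)
    rwa [one_pow, ← hq] at this
  have hkey : c (k + 3) ^ m =
      (a (k + 3) * a (k + 2) * a (k + 1) * c (k + 1) ^ (m + 1)) ^ m :=
    key_eq m (a (k + 1)) (a (k + 2)) (a (k + 3)) (c (k + 1)) (c (k + 3))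
      hA0 hB0 hC0 h1 h2 h3 h4 hfr
  set t : K := a (k + 3) * a (k + 2) * a (k + 1) * c (k + 1) ^ (m + 1) with ht
  have ht0 : t ≠ 0 :=
    mul_ne_zero (mul_ne_zero (mul_ne_zero hC0 hB0) hA0) (pow_ne_zero _ hcm0)
  -- a (k+1) ∈ L
  have hAinv : a (k + 1) = (1 - c (k + 1) ^ m)⁻¹ := by
    apply eq_inv_of_mul_eq_one_right
    linear_combination -h3
  have hAL : a (k + 1) ∈ L := by
    rw [hAinv]
    exact L.inv_mem (L.sub_mem L.one_mem (L.pow_mem hcmL _))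
  have htL : t ∈ L := by
    rw [ht]
    exact L.mul_mem (L.mul_mem (L.mul_mem hCL hBL) hAL) (L.pow_mem hcmL _)
  -- ζ := c (k+3) / t is a (q-1)-st root of unity, hence in F
  set ζ : K := c (k + 3) * t⁻¹ with hζ
  have hζm : ζ ^ m = 1 := by
    rw [hζ, mul_pow, inv_pow, hkey, mul_inv_cancel₀ (pow_ne_zero _ ht0)]
  have hζq3 : ζ ^ (m + 1) ^ 3 = ζ := by
    have harith : (m + 1) ^ 3 = m * ((m + 1) ^ 2 + (m + 1) + 1) + 1 := by ring
    rw [harith, pow_succ, pow_mul, hζm, one_pow, one_mul]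
  have hζF : ζ ∈ F :=
    mem_of_pow_eq_self F hFfin ((m + 1) ^ 3) (Nat.one_lt_pow (by norm_num) (by omega)) hFcard ζ hζq3
  have hfinal : c (k + 2 + 1) = ζ * t := by
    rw [hζ, mul_assoc, inv_mul_cancel₀ ht0, mul_one]
  rw [hfinal]
  exact L.mul_mem (hFL ζ hζF) htL
end

section
/- For every integer n ≥ 2, the element b_{n+1} belongs to the subfield of K generated by F and the elements b_{n−1}, a_n, a_{n+1}; that is, b_{n+1} ∈ F(b_{n−1}, a_n, a_{n+1}). -/
open Polynomial in
lemma mem_subfield_of_pow_natCard {K : Type*} [Field K] (F : Subfield K) [Finite F]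
    {N : ℕ} (hN : 1 < N) (hcard : Nat.card F = N) {x : K} (hx : x ^ N = x) : x ∈ F := by
  classical
  have : Fintype F := Fintype.ofFinite F
  have hFc : Fintype.card F = N := by rw [← Nat.card_eq_fintype_card, hcard]
  set P : K[X] := X ^ N - X with hP
  have hPdeg : P.natDegree = N := FiniteField.X_pow_card_sub_X_natDegree_eq K hN
  have hP0 : P ≠ 0 := FiniteField.X_pow_card_sub_X_ne_zero K hN
  set s : Finset K := Finset.univ.image (fun y : F => (y : K)) with hs
  have hs_card : s.card = N := by
    rw [hs, Finset.card_image_of_injective _ Subtype.val_injective, Finset.card_univ, hFc]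
  set t : Finset K := P.roots.toFinset with ht
  have hst : s ⊆ t := by
    intro z hz
    rw [hs, Finset.mem_image] at hz
    obtain ⟨y, -, rfl⟩ := hz
    have hy : y ^ N = y := by rw [← hFc]; exact FiniteField.pow_card y
    have hzN : (y : K) ^ N = (y : K) := by exact_mod_cast congrArg Subtype.val hy
    rw [ht, Multiset.mem_toFinset, Polynomial.mem_roots hP0]
    simp [hP, Polynomial.IsRoot, hzN]
  have ht_card : t.card ≤ N := by
    rw [ht]
    exact (Multiset.toFinset_card_le _).trans ((Polynomial.card_roots' P).trans_eq hPdeg)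
  have hset : s = t := Finset.eq_of_subset_of_card_le hst (ht_card.trans_eq hs_card.symm)
  have hxt : x ∈ t := by
    rw [ht, Multiset.mem_toFinset, Polynomial.mem_roots hP0]
    simp [hP, Polynomial.IsRoot, hx]
  rw [← hset, hs, Finset.mem_image] at hxt
  obtain ⟨y, -, hy⟩ := hxt
  rw [← hy]; exact y.2

theorem stmt_15
    (p : ℕ) (hp : p.Prime) (e : ℕ) (he : 0 < e) (q : ℕ) (hq : q = p ^ e)
    {K : Type*} [Field K] [CharP K p]
    (a b c : ℕ → K)
    (ha0 : ∀ n, 1 ≤ n → a n ≠ 0)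
    (ha1 : ∀ n, 1 ≤ n → a n ≠ 1)
    (ha2 : ∀ n, 1 ≤ n → a n ^ q + a n - 1 ≠ 0)
    (hR1 : ∀ n, 1 ≤ n → (1 - a (n + 1)) * a n = a (n + 1) ^ q * (a n ^ q + a n - 1))
    (hR2 : ∀ n, 1 ≤ n → c n ^ (q - 1) * a n = a n - 1)
    (hR3 : ∀ n, 1 ≤ n → b n ^ (q - 1) * a n = -(a n ^ q + a n - 1))
    (hb0 : ∀ n, 1 ≤ n → b n ≠ 0)
    (hc0 : ∀ n, 1 ≤ n → c n ≠ 0)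
    (F : Subfield K) (hFfin : Finite F) (hFcard : Nat.card F = q ^ 3)
    : ∀ n, 2 ≤ n →
      b (n + 1) ∈ fieldAdjoin F {b (n - 1), a n, a (n + 1)} := by
  intro n hn
  show b (n + 1) ∈ Subfield.closure (↑F ∪ {b (n - 1), a n, a (n + 1)})
  have hfact : Fact p.Prime := ⟨hp⟩
  have hq2 : 2 ≤ q := by
    rw [hq]; exact hp.two_le.trans (Nat.le_self_pow he.ne' p)
  have hq1 : q - 1 + 1 = q := by omega
  have hn1 : 1 ≤ n - 1 := by omega
  have hn1' : n - 1 + 1 = n := by omega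
  have hnn : 1 ≤ n := by omega
  have hnp : 1 ≤ n + 1 := by omega
  have hA0 : a (n - 1) ^ q + a (n - 1) - 1 ≠ 0 := ha2 _ hn1
  have hAn : a n ^ q + a n - 1 ≠ 0 := ha2 _ hnn
  have han0 : a n ≠ 0 := ha0 _ hnn
  have han1 : a (n + 1) ≠ 0 := ha0 _ hnp
  have hbn1 : b (n - 1) ≠ 0 := hb0 _ hn1
  have e1 := hR3 (n - 1) hn1
  have e2 := hR1 (n - 1) hn1
  rw [hn1'] at e2
  have e3 := hR3 (n + 1) hnp
  have e4 := hR1 n hnn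
  -- Step 1 : b(n-1)^(q-1) * a n ^ q = a n - 1
  have S1 : b (n - 1) ^ (q - 1) * a n ^ q = a n - 1 := by
    have h0 : (b (n - 1) ^ (q - 1) * a n ^ q - (a n - 1)) * (a (n - 1) ^ q + a (n - 1) - 1) = 0 := by
      linear_combination (1 - a n) * e1 - b (n - 1) ^ (q - 1) * e2
    rcases mul_eq_zero.mp h0 with h | h
    · exact sub_eq_zero.mp h
    · exact absurd h hA0
  -- Step 2
  have S2 : b (n + 1) ^ (q - 1) * (a (n + 1) * (a n ^ q + a n - 1))
      = -((a (n + 1) - 1) * (a n ^ q - 1)) := by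
    linear_combination (a n ^ q + a n - 1) * e3 + e4
  have hPa : a (n + 1) ^ (q - 1) * a (n + 1) = a (n + 1) ^ q := by
    rw [← pow_succ, hq1]
  -- Step 4 : b(n+1)^(q-1) * a n = (a n ^ q - 1) * a (n+1) ^ (q-1)
  have S4 : b (n + 1) ^ (q - 1) * a n = (a n ^ q - 1) * a (n + 1) ^ (q - 1) := by
    have hne : a (n + 1) * (a n ^ q + a n - 1) ≠ 0 := mul_ne_zero han1 hAn
    apply mul_left_cancel₀ hne
    linear_combination a n * S2 - (a n ^ q - 1) * (a n ^ q + a n - 1) * hPa + (a n ^ q - 1) * e4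
  -- Step 3
  have hee : (q + 1) * (q - 1) + 1 = q * q := by
    rcases q with _ | k
    · omega
    · simp only [Nat.succ_sub_one]; ring
  have frob : (a n - 1) ^ q = a n ^ q - 1 := by
    rw [hq, sub_pow_char_pow, one_pow]
  have S3 : (b (n - 1) ^ q * a n ^ (q + 1) * a (n + 1)) ^ (q - 1) * a n
      = (a n ^ q - 1) * a (n + 1) ^ (q - 1) := by
    have hb' : (b (n - 1) ^ q) ^ (q - 1) = (b (n - 1) ^ (q - 1)) ^ q := by
      rw [← pow_mul, ← pow_mul, Nat.mul_comm]
    have ha' : (a n ^ (q + 1)) ^ (q - 1) * a n = (a n ^ q) ^ q := by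
      rw [← pow_mul, ← pow_succ, hee, pow_mul]
    calc (b (n - 1) ^ q * a n ^ (q + 1) * a (n + 1)) ^ (q - 1) * a n
        = (b (n - 1) ^ q) ^ (q - 1) * ((a n ^ (q + 1)) ^ (q - 1) * a n)
            * a (n + 1) ^ (q - 1) := by rw [mul_pow, mul_pow]; ring
      _ = (b (n - 1) ^ (q - 1)) ^ q * (a n ^ q) ^ q * a (n + 1) ^ (q - 1) := by rw [hb', ha']
      _ = (b (n - 1) ^ (q - 1) * a n ^ q) ^ q * a (n + 1) ^ (q - 1) := by rw [mul_pow]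
      _ = (a n - 1) ^ q * a (n + 1) ^ (q - 1) := by rw [S1]
      _ = (a n ^ q - 1) * a (n + 1) ^ (q - 1) := by rw [frob]
  -- the ratio is a (q-1)-st root of unity
  set X : K := b (n - 1) ^ q * a n ^ (q + 1) * a (n + 1) with hX
  have hX0 : X ≠ 0 :=
    mul_ne_zero (mul_ne_zero (pow_ne_zero _ hbn1) (pow_ne_zero _ han0)) han1
  have E : b (n + 1) ^ (q - 1) = X ^ (q - 1) :=
    mul_right_cancel₀ han0 (S4.trans S3.symm)
  set u : K := b (n + 1) * X⁻¹ with hu_def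
  have hu : u ^ (q - 1) = 1 := by
    rw [hu_def, mul_pow, inv_pow, E, mul_inv_cancel₀ (pow_ne_zero _ hX0)]
  have hee3 : (q - 1) * (q ^ 2 + q + 1) + 1 = q ^ 3 := by
    rcases q with _ | k
    · omega
    · simp only [Nat.succ_sub_one]; ring
  have hu3 : u ^ q ^ 3 = u := by
    calc u ^ q ^ 3 = u ^ ((q - 1) * (q ^ 2 + q + 1) + 1) := by rw [hee3]
      _ = (u ^ (q - 1)) ^ (q ^ 2 + q + 1) * u := by rw [pow_succ, pow_mul]
      _ = u := by rw [hu, one_pow, one_mul]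
  have huF : u ∈ F :=
    mem_subfield_of_pow_natCard F (Nat.one_lt_pow (by norm_num) hq2) hFcard hu3
  have hbe : b (n + 1) = u * X := by
    rw [hu_def]; field_simp
  rw [hbe]
  have hmem : ∀ z ∈ ({b (n - 1), a n, a (n + 1)} : Set K),
      z ∈ Subfield.closure (↑F ∪ {b (n - 1), a n, a (n + 1)}) := fun z hz =>
    Subfield.subset_closure (Set.mem_union_right _ hz)
  refine mul_mem (Subfield.subset_closure (Set.mem_union_left _ huF)) ?_
  exact mul_mem (mul_mem (pow_mem (hmem _ (by simp)) _) (pow_mem (hmem _ (by simp)) _))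
    (hmem _ (by simp))
end
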